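/- arXiv:0904.0814 — 10 statements merged into one kernel-verified Lean document; each statement's English description precedes it below -/
import Mathlib

section
/- Let the hypothesis set be bounded by B > 0 and let the transductive algorithm be uniformly β-cost-stable. Then for any two size-m training sets S and S' that differ in exactly one point, |φ(S) − φ(S')| ≤ 2β + B²·(m+u)/(mu). -/
/-! Exchanging one point of `S` changes the training sum on the `m - 1` common training points
by at most `(m - 1) β` and the test sum on the `u - 1` common test points by at most `(u - 1) β`,
while the two exchanged costs lie in `[0, B²]` and so differ by at most `B²`. After normalising,
the training and test errors each move by at most `β + B²/m` and `β + B²/u`. -/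

open Finset

section Exchange

variable {ι : Type*} [DecidableEq ι] {A A' : Finset ι} {a a' : ι} {c c' : ι → ℝ} {β D : ℝ}

theorem abs_sum_sub_sum_le_of_exchange (hA : A \ A' = {a}) (hA' : A' \ A = {a'})
    (hc : ∀ x, |c x - c' x| ≤ β) (hD : |c a - c' a'| ≤ D) :
    |∑ x ∈ A, c x - ∑ x ∈ A', c' x| ≤ #(A ∩ A') * β + D := by
  have hsplit : ∑ x ∈ A, c x - ∑ x ∈ A', c' x
      = ∑ x ∈ A ∩ A', (c x - c' x) + (c a - c' a') := by
    rw [← sum_inter_add_sum_sdiff A A', ← sum_inter_add_sum_sdiff A' A, hA, hA', inter_comm A',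
      sum_singleton, sum_singleton, sum_sub_distrib]
    ring
  have hcommon : |∑ x ∈ A ∩ A', (c x - c' x)| ≤ #(A ∩ A') * β :=
    calc |∑ x ∈ A ∩ A', (c x - c' x)| ≤ ∑ x ∈ A ∩ A', |c x - c' x| := abs_sum_le_sum_abs _ _
      _ ≤ #(A ∩ A') • β := sum_le_card_nsmul _ _ _ fun x _ ↦ hc x
      _ = #(A ∩ A') * β := nsmul_eq_mul _ _
  rw [hsplit]
  exact (abs_add_le _ _).trans (add_le_add hcommon hD)

theorem abs_mean_sub_mean_le_of_exchange {n : ℕ} (hn : #A = n) (hA : A \ A' = {a})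
    (hA' : A' \ A = {a'}) (hc : ∀ x, |c x - c' x| ≤ β) (hD : |c a - c' a'| ≤ D) :
    |1 / (n : ℝ) * ∑ x ∈ A, c x - 1 / (n : ℝ) * ∑ x ∈ A', c' x| ≤ β + D / n := by
  have hβ : 0 ≤ β := (abs_nonneg _).trans (hc a)
  have hcard : (#(A ∩ A') : ℝ) + 1 = n := by
    have := card_inter_add_card_sdiff A A'
    rw [hA, card_singleton] at this
    exact_mod_cast this.trans hn
  have hn_pos : (0 : ℝ) < n := by linarith [(#(A ∩ A')).cast_nonneg (α := ℝ)]
  rw [← mul_sub, abs_mul, abs_of_pos (by positivity), one_div_mul_eq_div,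
    div_le_iff₀ hn_pos, add_mul, div_mul_cancel₀ _ hn_pos.ne']
  nlinarith [abs_sum_sub_sum_le_of_exchange hA hA' hc hD]

end Exchange

theorem sq_sub_le_of_abs_sub_le {a b B : ℝ} (h : |a - b| ≤ B) : (a - b) ^ 2 ≤ B ^ 2 := by
  rw [← sq_abs]
  exact pow_le_pow_left₀ (abs_nonneg _) h 2

theorem stmt_2_general {V : Type*} [Fintype V] [DecidableEq V] (m u : ℕ) (hm : 1 ≤ m) (hu : 1 ≤ u)
    (hcard : Fintype.card V = m + u)
    (y : V → ℝ) (h : Finset V → V → ℝ) (B β : ℝ)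
    (hbound : ∀ S : Finset V, S.card = m → ∀ x : V, |h S x - y x| ≤ B)
    (hstable : ∀ S S' : Finset V, S.card = m → S'.card = m → (S \ S').card = 1 →
      ∀ x : V, |(h S' x - y x) ^ 2 - (h S x - y x) ^ 2| ≤ β)
    (S S' : Finset V) (hS : S.card = m) (hS' : S'.card = m) (hdiff : (S \ S').card = 1) :
    |((1 / (u : ℝ)) * ∑ x ∈ Sᶜ, (h S x - y x) ^ 2
        - (1 / (m : ℝ)) * ∑ x ∈ S, (h S x - y x) ^ 2)
      - ((1 / (u : ℝ)) * ∑ x ∈ S'ᶜ, (h S' x - y x) ^ 2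
        - (1 / (m : ℝ)) * ∑ x ∈ S', (h S' x - y x) ^ 2)|
      ≤ 2 * β + B ^ 2 * ((m : ℝ) + u) / ((m : ℝ) * u) := by
  obtain ⟨a, ha⟩ := card_eq_one.mp hdiff
  obtain ⟨a', ha'⟩ := card_eq_one.mp ((card_sdiff_comm (hS.trans hS'.symm)).symm.trans hdiff)
  have hstab : ∀ x, |(h S x - y x) ^ 2 - (h S' x - y x) ^ 2| ≤ β := fun x ↦
    abs_sub_comm ((h S x - y x) ^ 2) _ ▸ hstable S S' hS hS' hdiff x
  have hcross : ∀ x x', |(h S x - y x) ^ 2 - (h S' x' - y x') ^ 2| ≤ B ^ 2 := fun x x' ↦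
    abs_sub_le_of_nonneg_of_le (sq_nonneg _) (sq_sub_le_of_abs_sub_le (hbound S hS x))
      (sq_nonneg _) (sq_sub_le_of_abs_sub_le (hbound S' hS' x'))
  have htrain := abs_mean_sub_mean_le_of_exchange hS ha ha' hstab (hcross a a')
  have htest := abs_mean_sub_mean_le_of_exchange (A := Sᶜ) (A' := S'ᶜ) (n := u)
    (by rw [card_compl, hcard, hS]; omega) (by rwa [compl_sdiff_compl]) (by rwa [compl_sdiff_compl])
    hstab (hcross a' a)
  have hmu : B ^ 2 * ((m : ℝ) + u) / ((m : ℝ) * u) = B ^ 2 / u + B ^ 2 / m := by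
    field_simp
  rw [hmu]
  calc _ = |(1 / (u : ℝ) * ∑ x ∈ Sᶜ, (h S x - y x) ^ 2
            - 1 / (u : ℝ) * ∑ x ∈ S'ᶜ, (h S' x - y x) ^ 2)
          - (1 / (m : ℝ) * ∑ x ∈ S, (h S x - y x) ^ 2
            - 1 / (m : ℝ) * ∑ x ∈ S', (h S' x - y x) ^ 2)| := by ring_nf
    _ ≤ _ := (abs_sub _ _).trans (by linarith)

/-- Lemma 4: if the hypothesis set is bounded by `B` and the transductive algorithm is
uniformly `β`-cost-stable, then for training sets `S, S'` of size `m` differing in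
exactly one point, `|φ(S) − φ(S')| ≤ 2β + B²(m+u)/(mu)`, where
`φ(S) = R(h_S) − R̂(h_S)`. -/
theorem stmt_2 {V : Type*} [Fintype V] [DecidableEq V] (m u : ℕ) (hm : 1 ≤ m) (hu : 1 ≤ u)
    (hcard : Fintype.card V = m + u)
    (y : V → ℝ) (h : Finset V → V → ℝ) (B β : ℝ) (hB : 0 < B)
    (hbound : ∀ S : Finset V, S.card = m → ∀ x : V, |h S x - y x| ≤ B)
    (hstable : ∀ S S' : Finset V, S.card = m → S'.card = m → (S \ S').card = 1 →
      ∀ x : V, |(h S' x - y x) ^ 2 - (h S x - y x) ^ 2| ≤ β)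
    (S S' : Finset V) (hS : S.card = m) (hS' : S'.card = m) (hdiff : (S \ S').card = 1) :
    |((1 / (u : ℝ)) * ∑ x ∈ Sᶜ, (h S x - y x) ^ 2
        - (1 / (m : ℝ)) * ∑ x ∈ S, (h S x - y x) ^ 2)
      - ((1 / (u : ℝ)) * ∑ x ∈ S'ᶜ, (h S' x - y x) ^ 2
        - (1 / (m : ℝ)) * ∑ x ∈ S', (h S' x - y x) ^ 2)|
      ≤ 2 * β + B ^ 2 * ((m : ℝ) + u) / ((m : ℝ) * u) :=
  stmt_2_general m u hm hu hcard y h B β hbound hstable S S' hS hS' hdiff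
end

section
/- Let the transductive algorithm be uniformly β-cost-stable. Then |E_S[φ(S)]| ≤ β, where the expectation is over a training set S drawn uniformly at random among all size-m subsets of X. -/
/-!
Swapping a training point `z ∈ S` for a test point `x ∉ S` gives the training set
`S' = S - z + x`, and `(S, x, z) ↦ (S', x, z)` is a bijection from the triples in which `x` is
a test point of `S` onto those in which `x` is a training point of `S'`. Hence the sum of
`c(h_S, x) - c(h_{S'}, x)` over all triples is `m Σ_S Σ_{x ∉ S} c(h_S, x) - u Σ_S Σ_{x ∈ S} c(h_S, x)`,
which is `m u Σ_S φ(S)`. Stability bounds each of its `N u m` summands by `β`, where `N` is the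
number of training sets.
-/

open Finset

namespace Finset

variable {α : Type*} [DecidableEq α] {s : Finset α} {x z : α}

theorem card_insert_erase_of_notMem_of_mem (hx : x ∉ s) (hz : z ∈ s) :
    #(insert x (s.erase z)) = #s := by
  rw [card_insert_of_notMem (fun h => hx (mem_of_mem_erase h)), card_erase_add_one hz]

theorem sdiff_insert_erase_of_notMem_of_mem (hx : x ∉ s) (hz : z ∈ s) :
    s \ insert x (s.erase z) = {z} := by
  rw [sdiff_insert_of_notMem hx, sdiff_erase_self hz]

theorem notMem_insert_erase_of_notMem_of_mem (hx : x ∉ s) (hz : z ∈ s) :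
    z ∉ insert x (s.erase z) := by
  simp [ne_of_mem_of_not_mem hz hx]

theorem insert_erase_insert_erase_of_notMem_of_mem (hx : x ∉ s) (hz : z ∈ s) :
    insert z ((insert x (s.erase z)).erase x) = s := by
  rw [erase_insert (fun h => hx (mem_of_mem_erase h)), insert_erase hz]

end Finset

section Exchange

variable {V : Type*} [Fintype V] [DecidableEq V]

theorem sum_powersetCard_exchange {M : Type*} [AddCommMonoid M] (m : ℕ) (f : Finset V → V → M) :
    ∑ S ∈ powersetCard m univ, ∑ x ∈ Sᶜ, ∑ z ∈ S, f (insert x (S.erase z)) x =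
      ∑ S ∈ powersetCard m univ, ∑ x ∈ S, ∑ _z ∈ Sᶜ, f S x := by
  simp only [sum_sigma']
  refine sum_nbij' (fun p => ⟨insert p.2.1 (p.1.erase p.2.2), p.2⟩)
    (fun p => ⟨insert p.2.2 (p.1.erase p.2.1), p.2⟩) ?_ ?_ ?_ ?_ fun _ _ => rfl
  all_goals
    rintro ⟨S, x, z⟩ hp
    simp only [mem_sigma, mem_compl, mem_powersetCard_univ] at hp
    obtain ⟨rfl, hx, hz⟩ := hp
  · simp only [mem_sigma, mem_compl, mem_powersetCard_univ]
    exact ⟨card_insert_erase_of_notMem_of_mem hx hz, mem_insert_self _ _,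
      notMem_insert_erase_of_notMem_of_mem hx hz⟩
  · simp only [mem_sigma, mem_compl, mem_powersetCard_univ]
    exact ⟨card_insert_erase_of_notMem_of_mem hz hx,
      notMem_insert_erase_of_notMem_of_mem hz hx, mem_insert_self _ _⟩
  · exact Sigma.ext (insert_erase_insert_erase_of_notMem_of_mem hx hz) HEq.rfl
  · exact Sigma.ext (insert_erase_insert_erase_of_notMem_of_mem hz hx) HEq.rfl

theorem sum_powersetCard_exchange_sub {M : Type*} [AddCommGroup M] {m u : ℕ}
    (hcard : Fintype.card V = m + u) (c : Finset V → V → M) :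
    ∑ S ∈ powersetCard m univ, ∑ x ∈ Sᶜ, ∑ z ∈ S, (c S x - c (insert x (S.erase z)) x) =
      m • ∑ S ∈ powersetCard m univ, ∑ x ∈ Sᶜ, c S x -
        u • ∑ S ∈ powersetCard m univ, ∑ x ∈ S, c S x := by
  simp only [sum_sub_distrib, sum_powersetCard_exchange, sum_const, smul_sum]
  congr 1 <;> refine sum_congr rfl fun S hS => ?_ <;> rw [mem_powersetCard_univ] at hS
  · rw [hS]
  · rw [card_compl, hS, hcard, Nat.add_sub_cancel_left]

theorem abs_mul_sum_compl_sub_mul_sum_le {m u : ℕ} (hcard : Fintype.card V = m + u)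
    (c : Finset V → V → ℝ) {β : ℝ}
    (hstable : ∀ S S' : Finset V, #S = m → #S' = m → #(S \ S') = 1 → ∀ x, |c S' x - c S x| ≤ β) :
    |m * ∑ S ∈ powersetCard m univ, ∑ x ∈ Sᶜ, c S x -
        u * ∑ S ∈ powersetCard m univ, ∑ x ∈ S, c S x| ≤
      #(powersetCard m (univ : Finset V)) * u * m * β := by
  rw [← nsmul_eq_mul, ← nsmul_eq_mul, ← sum_powersetCard_exchange_sub hcard]
  calc _ ≤ ∑ S ∈ powersetCard m univ, ∑ x ∈ Sᶜ, ∑ z ∈ S, β := by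
        refine (abs_sum_le_sum_abs _ _).trans (sum_le_sum fun S hS => ?_)
        refine (abs_sum_le_sum_abs _ _).trans (sum_le_sum fun x hx => ?_)
        refine (abs_sum_le_sum_abs _ _).trans (sum_le_sum fun z hz => ?_)
        rw [mem_powersetCard_univ] at hS
        rw [mem_compl] at hx
        rw [abs_sub_comm]
        exact hstable _ _ hS (by rw [card_insert_erase_of_notMem_of_mem hx hz, hS])
          (by rw [sdiff_insert_erase_of_notMem_of_mem hx hz, card_singleton]) x
    _ = ∑ _S ∈ powersetCard m univ, u * (m * β) := by
        refine sum_congr rfl fun S hS => ?_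
        rw [mem_powersetCard_univ] at hS
        simp only [sum_const, card_compl, hS, hcard, Nat.add_sub_cancel_left, nsmul_eq_mul]
    _ = _ := by rw [sum_const, nsmul_eq_mul]; ring

end Exchange

/-- Lemma 5: if the transductive algorithm is uniformly `β`-cost-stable, then
`|E_S[φ(S)]| ≤ β`, the expectation being uniform over all size-`m` training subsets
of the full sample, where `φ(S) = R(h_S) − R̂(h_S)`. -/
theorem stmt_3 {V : Type*} [Fintype V] [DecidableEq V] (m u : ℕ) (hm : 1 ≤ m) (hu : 1 ≤ u)
    (hcard : Fintype.card V = m + u)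
    (y : V → ℝ) (h : Finset V → V → ℝ) (β : ℝ)
    (hstable : ∀ S S' : Finset V, S.card = m → S'.card = m → (S \ S').card = 1 →
      ∀ x : V, |(h S' x - y x) ^ 2 - (h S x - y x) ^ 2| ≤ β) :
    |(∑ S ∈ Finset.powersetCard m (Finset.univ : Finset V),
        ((1 / (u : ℝ)) * ∑ x ∈ Sᶜ, (h S x - y x) ^ 2
          - (1 / (m : ℝ)) * ∑ x ∈ S, (h S x - y x) ^ 2)) /
      ((Finset.powersetCard m (Finset.univ : Finset V)).card : ℝ)| ≤ β := by
  set c : Finset V → V → ℝ := fun S x => (h S x - y x) ^ 2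
  set P := powersetCard m (univ : Finset V)
  have hden : (0 : ℝ) < u * m * #P := by
    have hP : 0 < #P := card_pos.2 (powersetCard_nonempty.2 (by simp [hcard]))
    positivity
  have hsum : ∑ S ∈ P, (1 / (u : ℝ) * ∑ x ∈ Sᶜ, c S x - 1 / (m : ℝ) * ∑ x ∈ S, c S x) =
      (m * ∑ S ∈ P, ∑ x ∈ Sᶜ, c S x - u * ∑ S ∈ P, ∑ x ∈ S, c S x) / (u * m) := by
    rw [sum_sub_distrib, ← mul_sum, ← mul_sum]
    field_simp
  rw [hsum, div_div, abs_div, abs_of_pos hden, div_le_iff₀ hden]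
  calc _ ≤ #P * u * m * β := abs_mul_sum_compl_sub_mul_sum_le hcard c hstable
    _ = β * (u * m * #P) := by ring
end

section
/- Assume |y_k| ≤ M for all k ∈ [1,m] and |ỹ_k| ≤ M for all k ∈ [1,u]. Let h ∈ H be a minimizer of F(·, S) over H. Then ‖h‖_K ≤ M√(C+C'), and hence for all x ∈ X, |h(x)| ≤ κM√(C+C'). -/
/-!
Compare the minimizer with `f = 0`: each empirical mean of squared targets is at most `M²`, so
`F 0 ≤ (C + C') M²`, while the loss terms of `F h` are nonnegative, so `‖h‖² ≤ F h ≤ F 0`.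
The pointwise bound is then Cauchy–Schwarz against the reproducing element `k x`, whose norm is
at most `κ`.
-/

open scoped RealInnerProductSpace

lemma div_mul_sum_sq_le_of_abs_le {n : ℕ} {c M : ℝ} (hc : 0 ≤ c) (t : Fin n → ℝ)
    (ht : ∀ i, |t i| ≤ M) : c / n * ∑ i, t i ^ 2 ≤ c * M ^ 2 := by
  have hsum : ∑ i, t i ^ 2 ≤ n * M ^ 2 :=
    calc ∑ i, t i ^ 2 ≤ ∑ _i : Fin n, M ^ 2 :=
          Finset.sum_le_sum fun i _ => sq_le_sq' (abs_le.1 (ht i)).1 (abs_le.1 (ht i)).2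
      _ = n * M ^ 2 := by simp
  rcases n.eq_zero_or_pos with rfl | hn
  · simpa using mul_nonneg hc (sq_nonneg M)
  · calc c / n * ∑ i, t i ^ 2 ≤ c / n * (n * M ^ 2) := by gcongr
      _ = c * M ^ 2 := by field_simp

lemma norm_le_of_real_inner_self_le {E : Type*} [NormedAddCommGroup E] [InnerProductSpace ℝ E]
    {v : E} {κ : ℝ} (hκ : 0 ≤ κ) (hv : ⟪v, v⟫ ≤ κ ^ 2) : ‖v‖ ≤ κ := by
  rw [real_inner_self_eq_norm_sq] at hv
  exact (pow_le_pow_iff_left₀ (norm_nonneg v) hκ two_ne_zero).1 hv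

theorem stmt_5_general {H : Type*} [NormedAddCommGroup H] [InnerProductSpace ℝ H]
    (m u : ℕ) (hm : 0 < m)
    (k : Fin (m + u) → H) (κ M C C' : ℝ)
    (hκ0 : 0 ≤ κ) (hκ : ∀ x : Fin (m + u), ⟪k x, k x⟫ ≤ κ ^ 2)
    (hC : 0 ≤ C) (hC' : 0 ≤ C')
    (y : Fin m → ℝ) (yt : Fin u → ℝ)
    (hy : ∀ i, |y i| ≤ M) (hyt : ∀ i, |yt i| ≤ M)
    (F : H → ℝ)
    (hF : ∀ f : H, F f = ‖f‖ ^ 2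
      + (C / m) * ∑ i : Fin m, (⟪f, k (Fin.castAdd u i)⟫ - y i) ^ 2
      + (C' / u) * ∑ i : Fin u, (⟪f, k (Fin.natAdd m i)⟫ - yt i) ^ 2)
    (h : H) (hmin : ∀ f : H, F h ≤ F f) :
    ‖h‖ ≤ M * Real.sqrt (C + C') ∧
    ∀ x : Fin (m + u), |⟪h, k x⟫| ≤ κ * M * Real.sqrt (C + C') := by
  have hM : 0 ≤ M := (abs_nonneg _).trans (hy ⟨0, hm⟩)
  have hF_zero : F 0 ≤ (C + C') * M ^ 2 := by
    simp only [hF, norm_zero, inner_zero_left, zero_sub, neg_sq]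
    linarith [div_mul_sum_sq_le_of_abs_le hC y hy, div_mul_sum_sq_le_of_abs_le hC' yt hyt]
  have hF_ge : ‖h‖ ^ 2 ≤ F h := by
    rw [hF, add_assoc]
    exact le_add_of_nonneg_right (by positivity)
  have hnorm : ‖h‖ ≤ M * Real.sqrt (C + C') := by
    rw [← pow_le_pow_iff_left₀ (norm_nonneg h) (by positivity) two_ne_zero, mul_pow,
      Real.sq_sqrt (by positivity)]
    linarith [hmin 0]
  refine ⟨hnorm, fun x => ?_⟩
  calc |⟪h, k x⟫| ≤ ‖h‖ * ‖k x‖ := abs_real_inner_le_norm h (k x)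
    _ ≤ M * Real.sqrt (C + C') * κ :=
        mul_le_mul hnorm (norm_le_of_real_inner_self_le hκ0 (hκ x)) (norm_nonneg _)
          (by positivity)
    _ = κ * M * Real.sqrt (C + C') := by ring

/-- Lemma 7: bound on the norm and values of the minimizer of the LTR objective.
`H` is an RKHS of functions on the full sample `X = {x_1, …, x_{m+u}}`, represented by
its reproducing elements `k x ∈ H`; the value of a hypothesis `f` at `x` is `⟪f, k x⟫`.
If all labels `y` and pseudo-targets `yt` are bounded by `M` and `K(x,x) ≤ κ²`, then the
minimizer `h` of `F(·, S)` satisfies `‖h‖ ≤ M√(C+C')` and `|h(x)| ≤ κM√(C+C')`. -/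
theorem stmt_5 {H : Type*} [NormedAddCommGroup H] [InnerProductSpace ℝ H]
    (m u : ℕ) (hm : 0 < m) (hu : 0 < u)
    (k : Fin (m + u) → H) (κ M C C' : ℝ)
    (hκ0 : 0 ≤ κ) (hκ : ∀ x : Fin (m + u), ⟪k x, k x⟫ ≤ κ ^ 2)
    (hC : 0 ≤ C) (hC' : 0 ≤ C')
    (y : Fin m → ℝ) (yt : Fin u → ℝ)
    (hy : ∀ i, |y i| ≤ M) (hyt : ∀ i, |yt i| ≤ M)
    (F : H → ℝ)
    (hF : ∀ f : H, F f = ‖f‖ ^ 2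
      + (C / m) * ∑ i : Fin m, (⟪f, k (Fin.castAdd u i)⟫ - y i) ^ 2
      + (C' / u) * ∑ i : Fin u, (⟪f, k (Fin.natAdd m i)⟫ - yt i) ^ 2)
    (h : H) (hmin : ∀ f : H, F h ≤ F f) :
    ‖h‖ ≤ M * Real.sqrt (C + C') ∧
    ∀ x : Fin (m + u), |⟪h, k x⟫| ≤ κ * M * Real.sqrt (C + C') :=
  stmt_5_general m u hm k κ M C C' hκ0 hκ hC hC' y yt hy hyt F hF h hmin
end

section
/- Under the LTR setup with |y(x)| ≤ M for all labels and |ỹ(x)|, |ỹ'(x)| ≤ M for all pseudo-targets, for every point x of X: (C/m)·[(h'(x) − y(x))² − (h(x) − y(x))²] + (C'/u)·[(h'(x) − ỹ'(x))² − (h(x) − ỹ(x))²] ≤ 2AM·( κ·‖h' − h‖_K·(C/m + C'/u) + β_loc·C'/u ), where A = 1 + κ√(C + C'). -/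
/-!
Both minimizers are small: comparing with `f = 0` gives `‖h‖² ≤ F(h) ≤ F(0) ≤ (C + C') M²`, so
`‖h‖, ‖h'‖ ≤ √(C + C') M`, and by the reproducing property every residual `h(x) − y(x)` is at most
`A M` in absolute value. Writing each difference of squared losses as a difference times a sum
then bounds it by `2 A M` times the change of the residual, which is at most
`κ ‖h' − h‖ + β_loc`.
-/

open scoped RealInnerProductSpace

open Finset

lemma div_natCast_mul_le {C : ℝ} (hC : 0 ≤ C) {m n : ℕ} (hnm : n ≤ m) : C / m * n ≤ C := by
  rcases Nat.eq_zero_or_pos m with rfl | hm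
  · simpa using hC
  · rw [div_mul_eq_mul_div, div_le_iff₀ (by exact_mod_cast hm)]
    exact mul_le_mul_of_nonneg_left (by exact_mod_cast hnm) hC

lemma sq_sub_sq_le_of_abs_le {a b c c' d β B : ℝ} (hab : |b - a| ≤ d) (hc : |c - c'| ≤ β)
    (ha : |a - c| ≤ B) (hb : |b - c'| ≤ B) :
    (b - c') ^ 2 - (a - c) ^ 2 ≤ 2 * (d + β) * B := by
  have hdβ : 0 ≤ d + β := add_nonneg ((abs_nonneg _).trans hab) ((abs_nonneg _).trans hc)
  calc (b - c') ^ 2 - (a - c) ^ 2 = ((b - a) + (c - c')) * ((b - c') + (a - c)) := by ring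
    _ ≤ |(b - a) + (c - c')| * |(b - c') + (a - c)| := by rw [← abs_mul]; exact le_abs_self _
    _ ≤ (d + β) * (B + B) :=
        mul_le_mul ((abs_add_le _ _).trans (add_le_add hab hc))
          ((abs_add_le _ _).trans (add_le_add hb ha)) (abs_nonneg _) hdβ
    _ = 2 * (d + β) * B := by ring

lemma sum_sq_le_card_mul_sq {ι : Type*} (T : Finset ι) {y : ι → ℝ} {M : ℝ}
    (hy : ∀ x, |y x| ≤ M) : ∑ x ∈ T, y x ^ 2 ≤ #T * M ^ 2 := by
  simpa using sum_le_card_nsmul T _ (M ^ 2) fun x _ => sq_le_sq' (abs_le.mp (hy x)).1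
    (abs_le.mp (hy x)).2

lemma Finset.card_insert_erase_of_notMem {α : Type*} [DecidableEq α] {s : Finset α} {i j : α}
    (hi : i ∈ s) (hj : j ∉ s) : #(insert j (s.erase i)) = #s := by
  rw [card_insert_of_notMem fun h => hj (mem_of_mem_erase h), card_erase_add_one hi]

section InnerProductSpace

variable {H : Type*} [NormedAddCommGroup H] [InnerProductSpace ℝ H]

lemma norm_le_of_real_inner_self_le_sq {v : H} {κ : ℝ} (hκ : 0 ≤ κ) (hv : ⟪v, v⟫ ≤ κ ^ 2) :
    ‖v‖ ≤ κ := by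
  rw [real_inner_self_eq_norm_sq] at hv
  exact (pow_le_pow_iff_left₀ (norm_nonneg v) hκ two_ne_zero).mp hv

lemma abs_real_inner_sub_le {g v : H} {R κ t M : ℝ} (hg : ‖g‖ ≤ R) (hv : ‖v‖ ≤ κ)
    (ht : |t| ≤ M) : |⟪g, v⟫ - t| ≤ R * κ + M :=
  calc |⟪g, v⟫ - t| ≤ |⟪g, v⟫| + |t| := abs_sub _ _
    _ ≤ ‖g‖ * ‖v‖ + M := add_le_add (abs_real_inner_le_norm g v) ht
    _ ≤ R * κ + M := by gcongr; exact (norm_nonneg g).trans hg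

variable {ι : Type*} [Fintype ι] [DecidableEq ι]

noncomputable def ltrObjective (k : ι → H) (m u : ℕ) (C C' : ℝ) (T : Finset ι) (y yt : ι → ℝ)
    (f : H) : ℝ :=
  ‖f‖ ^ 2 + (C / m) * ∑ x ∈ T, (⟪f, k x⟫ - y x) ^ 2
    + (C' / u) * ∑ x ∈ Tᶜ, (⟪f, k x⟫ - yt x) ^ 2

variable {k : ι → H} {m u : ℕ} {C C' M : ℝ} {T : Finset ι} {y yt : ι → ℝ}

lemma sq_norm_le_ltrObjective (hC : 0 ≤ C) (hC' : 0 ≤ C') (f : H) :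
    ‖f‖ ^ 2 ≤ ltrObjective k m u C C' T y yt f := by
  have hlab := mul_nonneg (div_nonneg hC m.cast_nonneg)
    (sum_nonneg fun x (_ : x ∈ T) => sq_nonneg (⟪f, k x⟫ - y x))
  have htest := mul_nonneg (div_nonneg hC' u.cast_nonneg)
    (sum_nonneg fun x (_ : x ∈ Tᶜ) => sq_nonneg (⟪f, k x⟫ - yt x))
  unfold ltrObjective
  linarith

lemma ltrObjective_zero_le (hC : 0 ≤ C) (hC' : 0 ≤ C') (hT : #T ≤ m) (hTc : #Tᶜ ≤ u)
    (hy : ∀ x, |y x| ≤ M) (hyt : ∀ x, |yt x| ≤ M) :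
    ltrObjective k m u C C' T y yt 0 ≤ (C + C') * M ^ 2 := by
  simp only [ltrObjective, norm_zero, inner_zero_left, zero_sub, neg_sq]
  have hlab :=
    mul_le_mul_of_nonneg_left (sum_sq_le_card_mul_sq T hy) (div_nonneg hC m.cast_nonneg)
  have htest :=
    mul_le_mul_of_nonneg_left (sum_sq_le_card_mul_sq Tᶜ hyt) (div_nonneg hC' u.cast_nonneg)
  have hM := sq_nonneg M
  nlinarith [div_natCast_mul_le hC hT, div_natCast_mul_le hC' hTc]

lemma norm_le_of_forall_ltrObjective_le (hC : 0 ≤ C) (hC' : 0 ≤ C') (hM : 0 ≤ M)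
    (hT : #T ≤ m) (hTc : #Tᶜ ≤ u) (hy : ∀ x, |y x| ≤ M) (hyt : ∀ x, |yt x| ≤ M) {g : H}
    (hg : ∀ f, ltrObjective k m u C C' T y yt g ≤ ltrObjective k m u C C' T y yt f) :
    ‖g‖ ≤ √(C + C') * M := by
  refine (pow_le_pow_iff_left₀ (norm_nonneg g) (by positivity) two_ne_zero).mp ?_
  rw [mul_pow, Real.sq_sqrt (add_nonneg hC hC')]
  exact (sq_norm_le_ltrObjective hC hC' g).trans
    ((hg 0).trans (ltrObjective_zero_le hC hC' hT hTc hy hyt))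

end InnerProductSpace

theorem stmt_7_general {H : Type*} [NormedAddCommGroup H] [InnerProductSpace ℝ H]
    (m u : ℕ)
    (k : Fin (m + u) → H) (κ M C C' βloc : ℝ)
    (hκ0 : 0 ≤ κ) (hκ : ∀ x : Fin (m + u), ⟪k x, k x⟫ ≤ κ ^ 2)
    (hC : 0 ≤ C) (hC' : 0 ≤ C')
    (y yt yt' : Fin (m + u) → ℝ)
    (hy : ∀ x, |y x| ≤ M) (hyt : ∀ x, |yt x| ≤ M) (hyt' : ∀ x, |yt' x| ≤ M)
    (hβloc : ∀ x, |yt x - yt' x| ≤ βloc)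
    (S S' : Finset (Fin (m + u))) (hS : S.card = m)
    (i j : Fin (m + u)) (hi : i ∈ S) (hj : j ∉ S) (hS' : S' = insert j (S.erase i))
    (F F' : H → ℝ)
    (hF : ∀ f : H, F f = ‖f‖ ^ 2 + (C / m) * ∑ x ∈ S, (⟪f, k x⟫ - y x) ^ 2
      + (C' / u) * ∑ x ∈ Sᶜ, (⟪f, k x⟫ - yt x) ^ 2)
    (hF' : ∀ f : H, F' f = ‖f‖ ^ 2 + (C / m) * ∑ x ∈ S', (⟪f, k x⟫ - y x) ^ 2
      + (C' / u) * ∑ x ∈ S'ᶜ, (⟪f, k x⟫ - yt' x) ^ 2)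
    (h h' : H) (hmin : ∀ f : H, F h ≤ F f) (hmin' : ∀ f : H, F' h' ≤ F' f)
    (A : ℝ) (hA : A = 1 + κ * Real.sqrt (C + C')) :
    ∀ x : Fin (m + u),
      (C / m) * ((⟪h', k x⟫ - y x) ^ 2 - (⟪h, k x⟫ - y x) ^ 2)
        + (C' / u) * ((⟪h', k x⟫ - yt' x) ^ 2 - (⟪h, k x⟫ - yt x) ^ 2)
      ≤ 2 * A * M * (κ * ‖h' - h‖ * (C / m + C' / u) + βloc * (C' / u)) := by
  obtain rfl : F = ltrObjective k m u C C' S y yt := funext hF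
  obtain rfl : F' = ltrObjective k m u C C' S' y yt' := funext hF'
  have hM : 0 ≤ M := (abs_nonneg _).trans (hy i)
  have hk x : ‖k x‖ ≤ κ := norm_le_of_real_inner_self_le_sq hκ0 (hκ x)
  have hcompl (T : Finset (Fin (m + u))) (hT : #T = m) : #Tᶜ ≤ u := by
    rw [card_compl, hT, Fintype.card_fin]; omega
  have hS'card : #S' = m := by rw [hS', card_insert_erase_of_notMem hi hj, hS]
  have hh := norm_le_of_forall_ltrObjective_le hC hC' hM hS.le (hcompl S hS) hy hyt hmin
  have hh' :=
    norm_le_of_forall_ltrObjective_le hC hC' hM hS'card.le (hcompl S' hS'card) hy hyt' hmin'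
  intro x
  have hres {g : H} (hg : ‖g‖ ≤ √(C + C') * M) {t : Fin (m + u) → ℝ} (ht : ∀ z, |t z| ≤ M) :
      |⟪g, k x⟫ - t x| ≤ A * M := by
    have := abs_real_inner_sub_le hg (hk x) (ht x)
    rw [hA]; linarith
  have hdiff : |⟪h', k x⟫ - ⟪h, k x⟫| ≤ κ * ‖h' - h‖ := by
    rw [← inner_sub_left, mul_comm]
    exact (abs_real_inner_le_norm _ _).trans (mul_le_mul_of_nonneg_left (hk x) (norm_nonneg _))
  have hlab := sq_sub_sq_le_of_abs_le hdiff (by simp : |y x - y x| ≤ 0) (hres hh hy) (hres hh' hy)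
  have htest := sq_sub_sq_le_of_abs_le hdiff (hβloc x) (hres hh hyt) (hres hh' hyt')
  calc _ ≤ (C / m) * (2 * (κ * ‖h' - h‖ + 0) * (A * M))
        + (C' / u) * (2 * (κ * ‖h' - h‖ + βloc) * (A * M)) :=
        add_le_add (mul_le_mul_of_nonneg_left hlab (div_nonneg hC m.cast_nonneg))
          (mul_le_mul_of_nonneg_left htest (div_nonneg hC' u.cast_nonneg))
    _ = _ := by ring

/-- Lemma 9: under the LTR setup (labels `y` and pseudo-targets `yt`, `yt'` bounded by
`M`, pseudo-targets differing by at most `βloc`), for every point `x` of the full sample,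
`(C/m)[c(h',x) − c(h,x)] + (C'/u)[c̃'(h',x) − c̃(h,x)]
  ≤ 2AM(κ‖h'−h‖(C/m + C'/u) + βloc C'/u)` where `A = 1 + κ√(C+C')`.
The RKHS `H` of functions on the full sample is represented by its reproducing elements
`k x ∈ H`, the value of `f` at `x` being `⟪f, k x⟫`; `h` minimizes the objective
`F(·,S)` (training set `S`, pseudo-targets `yt` on the test set `Sᶜ`) and `h'` minimizes
`F(·,S')`, where `S'` is obtained from `S` by swapping the labeled point `i ∈ S` with
the unlabeled point `j ∉ S`. -/
theorem stmt_7 {H : Type*} [NormedAddCommGroup H] [InnerProductSpace ℝ H]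
    (m u : ℕ) (hm : 0 < m) (hu : 0 < u)
    (k : Fin (m + u) → H) (κ M C C' βloc : ℝ)
    (hκ0 : 0 ≤ κ) (hκ : ∀ x : Fin (m + u), ⟪k x, k x⟫ ≤ κ ^ 2)
    (hC : 0 ≤ C) (hC' : 0 ≤ C')
    (y yt yt' : Fin (m + u) → ℝ)
    (hy : ∀ x, |y x| ≤ M) (hyt : ∀ x, |yt x| ≤ M) (hyt' : ∀ x, |yt' x| ≤ M)
    (hβloc : ∀ x, |yt x - yt' x| ≤ βloc)
    (S S' : Finset (Fin (m + u))) (hS : S.card = m)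
    (i j : Fin (m + u)) (hi : i ∈ S) (hj : j ∉ S) (hS' : S' = insert j (S.erase i))
    (F F' : H → ℝ)
    (hF : ∀ f : H, F f = ‖f‖ ^ 2 + (C / m) * ∑ x ∈ S, (⟪f, k x⟫ - y x) ^ 2
      + (C' / u) * ∑ x ∈ Sᶜ, (⟪f, k x⟫ - yt x) ^ 2)
    (hF' : ∀ f : H, F' f = ‖f‖ ^ 2 + (C / m) * ∑ x ∈ S', (⟪f, k x⟫ - y x) ^ 2
      + (C' / u) * ∑ x ∈ S'ᶜ, (⟪f, k x⟫ - yt' x) ^ 2)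
    (h h' : H) (hmin : ∀ f : H, F h ≤ F f) (hmin' : ∀ f : H, F' h' ≤ F' f)
    (A : ℝ) (hA : A = 1 + κ * Real.sqrt (C + C')) :
    ∀ x : Fin (m + u),
      (C / m) * ((⟪h', k x⟫ - y x) ^ 2 - (⟪h, k x⟫ - y x) ^ 2)
        + (C' / u) * ((⟪h', k x⟫ - yt' x) ^ 2 - (⟪h, k x⟫ - yt x) ^ 2)
      ≤ 2 * A * M * (κ * ‖h' - h‖ * (C / m + C' / u) + βloc * (C' / u)) :=
  stmt_7_general m u k κ M C C' βloc hκ0 hκ hC hC' y yt yt' hy hyt hyt' hβloc S S' hS i j hi hj hS'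
    F F' hF hF' h h' hmin hmin' A hA
end

section
/- Let Q be a symmetric positive semidefinite n×n real matrix, μ > 0, and let y, y' ∈ ℝⁿ differ in at most two coordinates, with every coordinate of y − y' of absolute value at most M. Then μ⁻¹Q + I is invertible and the vectors h = (μ⁻¹Q + I)⁻¹ y and h' = (μ⁻¹Q + I)⁻¹ y' satisfy ‖h − h'‖_∞ ≤ √2·M. -/
open Matrix

/-- Sup (ℓ^∞) norm of a vector in `Fin n → ℝ`. -/
noncomputable def vnormInf {n : ℕ} (v : Fin n → ℝ) : ℝ := ⨆ i, |v i|

/-!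
For `P` positive semidefinite, `w = (P + 1)⁻¹ v` satisfies `w ⬝ w ≤ w ⬝ ((P + 1) w) = w ⬝ v`,
and `2 (w ⬝ v) ≤ w ⬝ w + v ⬝ v`, so `‖w‖₂ ≤ ‖v‖₂`. The sup norm of `w` is at most its Euclidean
norm, and a vector with at most two nonzero coordinates, each bounded by `M`, has Euclidean
norm at most `√2 M`.
-/

lemma vnormInf_le_of_abs_le {n : ℕ} (hn : 0 < n) {v : Fin n → ℝ} {c : ℝ}
    (h : ∀ i, |v i| ≤ c) : vnormInf v ≤ c :=
  haveI : Nonempty (Fin n) := ⟨⟨0, hn⟩⟩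
  ciSup_le h

section DotProduct

variable {ι : Type*} [Fintype ι]

lemma sq_le_dotProduct_self (w : ι → ℝ) (i : ι) : w i ^ 2 ≤ w ⬝ᵥ w := by
  rw [sq]
  exact Finset.single_le_sum (f := fun j => w j * w j) (fun j _ => mul_self_nonneg (w j))
    (Finset.mem_univ i)

lemma two_mul_dotProduct_le (w v : ι → ℝ) : 2 * (w ⬝ᵥ v) ≤ w ⬝ᵥ w + v ⬝ᵥ v := by
  simp only [dotProduct, Finset.mul_sum, ← Finset.sum_add_distrib, ← sq, ← mul_assoc]
  exact Finset.sum_le_sum fun i _ => two_mul_le_add_sq (w i) (v i)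

lemma dotProduct_self_sub_le [DecidableEq ι] {y y' : ι → ℝ} {M : ℝ}
    (hM : ∀ i, |y i - y' i| ≤ M) :
    (y - y') ⬝ᵥ (y - y') ≤ (Finset.univ.filter (fun i => y i ≠ y' i)).card * M ^ 2 := by
  have hsupport : (y - y') ⬝ᵥ (y - y') =
      ∑ i ∈ Finset.univ.filter (fun i => y i ≠ y' i), (y i - y' i) ^ 2 := by
    rw [Finset.sum_filter_of_ne (p := fun i => y i ≠ y' i)
      fun i _ hne heq => hne (by rw [heq, sub_self, sq, mul_zero])]
    simp only [dotProduct, Pi.sub_apply, sq]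
  rw [hsupport, ← nsmul_eq_mul, ← Finset.sum_const]
  exact Finset.sum_le_sum fun i _ => sq_le_sq' (abs_le.1 (hM i)).1 (abs_le.1 (hM i)).2

lemma Matrix.PosSemidef.dotProduct_self_inv_add_one_mulVec_le [DecidableEq ι]
    {P : Matrix ι ι ℝ} (hP : P.PosSemidef) (v : ι → ℝ) :
    ((P + 1)⁻¹ *ᵥ v) ⬝ᵥ ((P + 1)⁻¹ *ᵥ v) ≤ v ⬝ᵥ v := by
  set w := (P + 1)⁻¹ *ᵥ v
  have hunit : IsUnit (P + 1).det :=
    (isUnit_iff_isUnit_det _).1 (PosDef.posSemidef_add hP PosDef.one).isUnit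
  have hw : (P + 1) *ᵥ w = v := by
    rw [mulVec_mulVec, mul_nonsing_inv _ hunit, one_mulVec]
  have hquad : 0 ≤ w ⬝ᵥ (P *ᵥ w) := by simpa using hP.dotProduct_mulVec_nonneg w
  have hww : w ⬝ᵥ w ≤ w ⬝ᵥ v := by
    rw [← hw, add_mulVec, one_mulVec, dotProduct_add]
    linarith
  linarith [two_mul_dotProduct_le w v]

end DotProduct

/-- Score stability of the Consistency Method: for `Q` symmetric positive semidefinite
(the normalized Laplacian), `μ > 0`, and target vectors `y, y'` differing in at most two
coordinates, each coordinate of `y − y'` bounded by `M` in absolute value, the matrix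
`μ⁻¹Q + I` is invertible and the predictions `h = (μ⁻¹Q + I)⁻¹ y`,
`h' = (μ⁻¹Q + I)⁻¹ y'` satisfy `‖h − h'‖_∞ ≤ √2·M`. -/
theorem stmt_11 {n : ℕ} (hn : 0 < n)
    (Q : Matrix (Fin n) (Fin n) ℝ) (hQ : Q.PosSemidef)
    (μ M : ℝ) (hμ : 0 < μ)
    (y y' : Fin n → ℝ)
    (hdiff : (Finset.univ.filter (fun i => y i ≠ y' i)).card ≤ 2)
    (hM : ∀ i, |y i - y' i| ≤ M) :
    IsUnit (μ⁻¹ • Q + 1) ∧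
    vnormInf ((μ⁻¹ • Q + 1)⁻¹ *ᵥ y - (μ⁻¹ • Q + 1)⁻¹ *ᵥ y') ≤ Real.sqrt 2 * M := by
  have hP : (μ⁻¹ • Q).PosSemidef := hQ.smul (inv_nonneg.2 hμ.le)
  refine ⟨(PosDef.posSemidef_add hP PosDef.one).isUnit, ?_⟩
  rw [← mulVec_sub]
  have hM₀ : 0 ≤ M := (abs_nonneg _).trans (hM ⟨0, hn⟩)
  have hcard : ((Finset.univ.filter (fun i => y i ≠ y' i)).card : ℝ) ≤ 2 := by exact_mod_cast hdiff
  refine vnormInf_le_of_abs_le hn fun i => abs_le_of_sq_le_sq ?_ (by positivity)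
  calc ((μ⁻¹ • Q + 1)⁻¹ *ᵥ (y - y')) i ^ 2
      ≤ ((μ⁻¹ • Q + 1)⁻¹ *ᵥ (y - y')) ⬝ᵥ ((μ⁻¹ • Q + 1)⁻¹ *ᵥ (y - y')) :=
        sq_le_dotProduct_self _ i
    _ ≤ (y - y') ⬝ᵥ (y - y') := hP.dotProduct_self_inv_add_one_mulVec_le _
    _ ≤ (Finset.univ.filter (fun i => y i ≠ y' i)).card * M ^ 2 := dotProduct_self_sub_le hM
    _ ≤ 2 * M ^ 2 := by gcongr
    _ = (Real.sqrt 2 * M) ^ 2 := by rw [mul_pow, Real.sq_sqrt zero_le_two]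
end

section
/- Let m ≥ 2 be an integer and C > 0 a real number. Let N be the m×m real matrix with diagonal entries all equal to 1 + 1/C and off-diagonal entries all equal to −1/(C(m−1)). Then N is invertible, every diagonal entry of N⁻¹ equals 1/m + ((m−1)/m)·C/(C + m/(m−1)), and this value is at least (1/2)·C/(C+1). -/
/-!
Write `N = a • 1 - b • J` with `J` the all-ones matrix, `b = 1/(C(m-1))` and `a = 1 + 1/C + b`,
so that `a - m b = 1`. Since `J * J = m • J`, such matrices are closed under multiplication, and
`a⁻¹ • 1 + (b / (a (a - m b))) • J` is the inverse, whose diagonal entries are explicit.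
For the bound, the diagonal value is `t + (1 - t)/m` with `t = C/(C + m/(m-1)) ≤ 1`, hence at
least `t ≥ C/(C + 2) ≥ C/(2C + 2)`, using `m/(m-1) ≤ 2`.
-/

open Matrix

section AllOnes

variable {n K : Type*} [Fintype n] [Field K]

theorem of_one_mul_of_one : (of 1 : Matrix n n K) * of 1 = (Fintype.card n : K) • of 1 := by
  ext i j
  simp [mul_apply]

variable [DecidableEq n]

theorem smul_one_add_smul_of_one_mul (a b p q : K) :
    (a • 1 + b • of 1 : Matrix n n K) * (p • 1 + q • of 1) =
      (a * p) • 1 + (a * q + b * p + Fintype.card n * b * q) • of 1 := by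
  simp only [add_mul, mul_add, smul_mul_smul_comm, one_mul, mul_one, of_one_mul_of_one, smul_smul]
  module

theorem smul_one_add_smul_of_one_mul_inverse {a b : K} (ha : a ≠ 0)
    (hab : a + Fintype.card n * b ≠ 0) :
    (a • 1 + b • of 1 : Matrix n n K) *
      (a⁻¹ • 1 + (-(b / (a * (a + Fintype.card n * b)))) • of 1) = 1 := by
  set c := a + Fintype.card n * b with hc
  have hcoef : a * -(b / (a * c)) + b * a⁻¹ + Fintype.card n * b * -(b / (a * c)) = 0 := by
    field_simp
    linear_combination b * hc
  rw [smul_one_add_smul_of_one_mul, mul_inv_cancel₀ ha, hcoef, one_smul, zero_smul, add_zero]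

theorem isUnit_smul_one_add_smul_of_one {a b : K} (ha : a ≠ 0)
    (hab : a + Fintype.card n * b ≠ 0) : IsUnit (a • 1 + b • of 1 : Matrix n n K) :=
  (isUnit_iff_isUnit_det _).2
    (isUnit_det_of_right_inverse (smul_one_add_smul_of_one_mul_inverse ha hab))

theorem inv_smul_one_add_smul_of_one_apply_self {a b : K} (ha : a ≠ 0)
    (hab : a + Fintype.card n * b ≠ 0) (i : n) :
    (a • 1 + b • of 1 : Matrix n n K)⁻¹ i i =
      (a + (Fintype.card n - 1) * b) / (a * (a + Fintype.card n * b)) := by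
  rw [inv_eq_right_inv (smul_one_add_smul_of_one_mul_inverse ha hab)]
  simp only [Matrix.add_apply, Matrix.smul_apply, one_apply_eq, of_apply, Pi.one_apply, smul_eq_mul,
    mul_one]
  set c := a + Fintype.card n * b with hc
  field_simp
  linear_combination hc

end AllOnes

theorem half_mul_div_add_one_le {m C : ℝ} (hm : 2 ≤ m) (hC : 0 < C) :
    1 / 2 * (C / (C + 1)) ≤ 1 / m + (m - 1) / m * (C / (C + m / (m - 1))) := by
  have hm1 : 0 < m - 1 := by linarith
  set t := C / (C + m / (m - 1))
  have ht_le_one : t ≤ 1 := div_le_one_of_le₀ (by simp; positivity) (by positivity)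
  have hm_div_le_two : m / (m - 1) ≤ 2 := by rw [div_le_iff₀ hm1]; linarith
  calc 1 / 2 * (C / (C + 1)) = C / (2 * C + 2) := by field_simp
    _ ≤ C / (C + 2) := by gcongr; linarith
    _ ≤ t := by unfold t; gcongr
    _ ≤ t + (1 - t) / m := le_add_of_nonneg_right (div_nonneg (by linarith) (by linarith))
    _ = 1 / m + (m - 1) / m * t := by field_simp; ring

/-- Lower bound on the stability of the Consistency Method (Theorem 13, matrix
computation): for `m ≥ 2` and `C > 0`, the `m × m` matrix `N` with diagonal entries
`1 + 1/C` and off-diagonal entries `−1/(C(m−1))` is invertible, every diagonal entry of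
`N⁻¹` equals `1/m + ((m−1)/m)·C/(C + m/(m−1))`, and this value is at least
`(1/2)·C/(C+1)`. -/
theorem stmt_12 (m : ℕ) (hm : 2 ≤ m) (C : ℝ) (hC : 0 < C)
    (N : Matrix (Fin m) (Fin m) ℝ)
    (hN : N = Matrix.of fun i j =>
      if i = j then 1 + 1 / C else -(1 / (C * ((m : ℝ) - 1)))) :
    IsUnit N ∧
    (∀ i : Fin m, N⁻¹ i i =
      1 / (m : ℝ) + (((m : ℝ) - 1) / (m : ℝ)) * (C / (C + (m : ℝ) / ((m : ℝ) - 1)))) ∧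
    (1 / 2) * (C / (C + 1)) ≤
      1 / (m : ℝ) + (((m : ℝ) - 1) / (m : ℝ)) * (C / (C + (m : ℝ) / ((m : ℝ) - 1))) := by
  have hm2 : (2 : ℝ) ≤ m := by exact_mod_cast hm
  have hm1 : (0 : ℝ) < m - 1 := by linarith
  obtain ⟨b, hb⟩ : ∃ b, b = 1 / (C * ((m : ℝ) - 1)) := ⟨_, rfl⟩
  have hb_pos : 0 < b := by rw [hb]; positivity
  have hN_eq : N = (1 + 1 / C + b) • 1 + (-b) • of 1 := by
    subst hN hb
    ext i j
    by_cases hij : i = j <;> simp [hij]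
  have hab : 1 + 1 / C + b + Fintype.card (Fin m) * -b = 1 := by
    rw [Fintype.card_fin, hb]
    field_simp
    ring
  have ha : 1 + 1 / C + b ≠ 0 := by positivity
  have hab_ne : 1 + 1 / C + b + Fintype.card (Fin m) * -b ≠ 0 := by rw [hab]; exact one_ne_zero
  refine ⟨hN_eq ▸ isUnit_smul_one_add_smul_of_one ha hab_ne, fun i => ?_,
    half_mul_div_add_one_le hm2 hC⟩
  rw [hN_eq, inv_smul_one_add_smul_of_one_apply_self ha hab_ne, hab, Fintype.card_fin, hb]
  field_simp
  ring
end

section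
/- Let S and S' be size-m subsets of the vertex set differing in exactly one vertex, and let h and h' be minimizers of the objective hᵀLh + (C/m)·Σ_{i∈S}(h_i − y_i)² (respectively with S') over the subspace {h ∈ ℝⁿ : 𝟙ᵀh = 0}. Assume the hypothesis set is bounded: |h_i − y_i| ≤ M and |h'_i − y_i| ≤ M for all i. Then for every i, |(h_i − y_i)² − (h'_i − y_i)²| ≤ (4CM²/m)·κ², where κ² = max_i (L⁺)_{ii} and L⁺ is the Moore–Penrose pseudoinverse of L; moreover κ² ≤ 1/λ₂, so the bound is at most 4CM²/(mλ₂). -/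
open Matrix

/-!
The difference `Δ = h' - h` of the two minimizers has zero sum, so `L⁺ L Δ = Δ`, i.e.
`Δ_i = ⟨L⁺ e_i, Δ⟩_L` in the semi-inner product `⟨a, b⟩_L = aᵀ L b`; Cauchy–Schwarz gives
`Δ_i² ≤ (L⁺)_{ii} · ΔᵀLΔ ≤ κ² ΔᵀLΔ`. The objective is a convex quadratic, so it grows by at
least `ΔᵀLΔ` when moving away from a minimizer by `Δ`; applying this to both minimizers and adding,
only the two vertices in which `S` and `S'` differ survive, giving `ΔᵀLΔ ≤ (C/m) · 2M · max |Δ|`.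
Combining both bounds, `max |Δ| ≤ 2CMκ²/m`, and `|(h_i - y_i)² - (h'_i - y_i)²| ≤ 2M |Δ_i|`.
Finally `λ₂ (L⁺)_{ii} = λ₂ ⟨L⁺ e_i, L⁺ e_i⟩_L ≤ ‖L L⁺ e_i‖² ≤ 1` because `L L⁺` is an
orthogonal projection.
-/

namespace Matrix

variable {n : Type*}

theorem PosSemidef.isSymm {L : Matrix n n ℝ} (hL : L.PosSemidef) : L.IsSymm :=
  isHermitian_iff_isSymm.mp hL.1

variable [Fintype n]

theorem IsSymm.dotProduct_mulVec_comm {A : Matrix n n ℝ} (hA : A.IsSymm) (a b : n → ℝ) :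
    a ⬝ᵥ (A *ᵥ b) = b ⬝ᵥ (A *ᵥ a) := by
  rw [dotProduct_mulVec, ← mulVec_transpose, hA.eq, dotProduct_comm]

theorem IsSymm.mulVec_dotProduct_mulVec {A : Matrix n n ℝ} (hA : A.IsSymm) (B : Matrix n n ℝ)
    (x v : n → ℝ) : (A *ᵥ x) ⬝ᵥ (B *ᵥ v) = x ⬝ᵥ ((A * B) *ᵥ v) := by
  rw [← mulVec_mulVec, dotProduct_mulVec x A, ← mulVec_transpose, hA.eq]

theorem dotProduct_mulVec_self_le_of_isIdempotentElem {P : Matrix n n ℝ} (hP : P.IsSymm)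
    (hidem : IsIdempotentElem P) (x : n → ℝ) : (P *ᵥ x) ⬝ᵥ (P *ᵥ x) ≤ x ⬝ᵥ x := by
  have hPx : (P *ᵥ x) ⬝ᵥ (P *ᵥ x) = x ⬝ᵥ (P *ᵥ x) := by
    rw [hP.mulVec_dotProduct_mulVec, hidem.eq]
  have h0 := dotProduct_star_self_nonneg (x - P *ᵥ x)
  rw [star_trivial, sub_dotProduct, dotProduct_sub, dotProduct_sub, hPx,
    dotProduct_comm (P *ᵥ x) x] at h0
  linarith

namespace PosSemidef

variable {L : Matrix n n ℝ}

theorem dotProduct_mulVec_self_nonneg (hL : L.PosSemidef) (v : n → ℝ) :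
    0 ≤ v ⬝ᵥ (L *ᵥ v) := by
  simpa using hL.dotProduct_mulVec_nonneg v

theorem sq_dotProduct_mulVec_le (hL : L.PosSemidef) (a b : n → ℝ) :
    (a ⬝ᵥ (L *ᵥ b)) ^ 2 ≤ (a ⬝ᵥ (L *ᵥ a)) * (b ⬝ᵥ (L *ᵥ b)) := by
  classical
  have := LinearMap.BilinForm.apply_mul_apply_le_of_forall_zero_le (toLinearMap₂' ℝ L)
    (by simpa only [toLinearMap₂'_apply'] using hL.dotProduct_mulVec_self_nonneg) a b
  simpa only [toLinearMap₂'_apply', hL.isSymm.dotProduct_mulVec_comm b a, ← sq] using this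

theorem smul_dotProduct_mulVec_le [DecidableEq n] (hL : L.PosSemidef) {lam : ℝ}
    (hlam : ∀ i, hL.1.eigenvalues i ≠ 0 → lam ≤ hL.1.eigenvalues i) (x : n → ℝ) :
    lam * (x ⬝ᵥ (L *ᵥ x)) ≤ (L *ᵥ x) ⬝ᵥ (L *ᵥ x) := by
  open scoped MatrixOrder in
  have hpsd : (L * L - lam • L).PosSemidef := by
    have hnn : 0 ≤ cfc (fun t : ℝ => t ^ 2 - lam * t) L := by
      refine cfc_nonneg fun t ht => ?_
      obtain ⟨i, rfl⟩ := hL.1.spectrum_real_eq_range_eigenvalues ▸ ht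
      rcases eq_or_ne (hL.1.eigenvalues i) 0 with h0 | h0
      · simp [h0]
      · nlinarith [hlam i h0, hL.eigenvalues_nonneg i]
    rw [cfc_sub _ _ L (hf := by fun_prop) (hg := by fun_prop), cfc_pow_id L 2 hL.1.isSelfAdjoint,
      cfc_const_mul_id lam L hL.1.isSelfAdjoint, sq] at hnn
    exact hnn.posSemidef
  have := hpsd.dotProduct_mulVec_self_nonneg x
  rw [sub_mulVec, dotProduct_sub, ← mulVec_mulVec, smul_mulVec, dotProduct_smul, smul_eq_mul,
    hL.isSymm.dotProduct_mulVec_comm x] at this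
  linarith

end PosSemidef

structure IsMoorePenroseInverse (L Lp : Matrix n n ℝ) : Prop where
  mul_pinv_mul : L * Lp * L = L
  pinv_mul_pinv : Lp * L * Lp = Lp
  isSymm_mul_pinv : (L * Lp).IsSymm
  isSymm_pinv_mul : (Lp * L).IsSymm

namespace IsMoorePenroseInverse

variable {L Lp : Matrix n n ℝ} (hLp : IsMoorePenroseInverse L Lp)
include hLp

theorem mul_transpose_pinv (hL : L.IsSymm) : L * Lpᵀ = Lp * L := by
  rw [← hLp.isSymm_pinv_mul.eq, transpose_mul, hL.eq]

theorem transpose_pinv_mul (hL : L.IsSymm) : Lpᵀ * L = L * Lp := by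
  rw [← hLp.isSymm_mul_pinv.eq, transpose_mul, hL.eq]

theorem mul_comm (hL : L.IsSymm) : L * Lp = Lp * L := by
  have hp1t : L * Lpᵀ * L = L := by
    simpa only [transpose_mul, hL.eq, Matrix.mul_assoc] using congrArg transpose hLp.mul_pinv_mul
  calc L * Lp = L * Lpᵀ * L * Lp := by rw [hp1t]
    _ = Lp * L * (L * Lp) := by rw [hLp.mul_transpose_pinv hL, Matrix.mul_assoc]
    _ = Lp * (L * Lpᵀ * L) := by
      rw [← hLp.transpose_pinv_mul hL, Matrix.mul_assoc, Matrix.mul_assoc]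
    _ = Lp * L := by rw [hp1t]

theorem isSymm (hL : L.IsSymm) : Lp.IsSymm := by
  have hp2t : Lpᵀ * L * Lpᵀ = Lpᵀ := by
    simpa only [transpose_mul, hL.eq, Matrix.mul_assoc] using congrArg transpose hLp.pinv_mul_pinv
  calc Lpᵀ = L * Lp * Lpᵀ := by rw [← hLp.transpose_pinv_mul hL, hp2t]
    _ = Lp * (L * Lpᵀ) := by rw [hLp.mul_comm hL, Matrix.mul_assoc]
    _ = Lp * (L * Lp) := by rw [hLp.mul_transpose_pinv hL, hLp.mul_comm hL]
    _ = Lp := by rw [← Matrix.mul_assoc, hLp.pinv_mul_pinv]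

theorem pinv_mul_mulVec_of_sum_eq_zero [Nonempty n] (hL1 : L *ᵥ (fun _ => 1) = 0)
    (hker : ∀ v : n → ℝ, L *ᵥ v = 0 → ∃ a : ℝ, v = fun _ => a) {v : n → ℝ}
    (hv : ∑ i, v i = 0) : (Lp * L) *ᵥ v = v := by
  obtain ⟨a, ha⟩ := hker (v - (Lp * L) *ᵥ v) (by
    rw [mulVec_sub, mulVec_mulVec, ← Matrix.mul_assoc, hLp.mul_pinv_mul, sub_self])
  have hPv : ∑ i, ((Lp * L) *ᵥ v) i = 0 := by
    rw [← one_dotProduct, hLp.isSymm_pinv_mul.dotProduct_mulVec_comm, ← mulVec_mulVec]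
    change v ⬝ᵥ Lp *ᵥ L *ᵥ (fun _ => 1) = 0
    rw [hL1, mulVec_zero, dotProduct_zero]
  have ha0 : a = 0 := by
    have := congrArg (fun w => ∑ i, w i) ha
    simp only [Pi.sub_apply, Finset.sum_sub_distrib, hv, hPv, sub_zero, Finset.sum_const,
      Finset.card_univ, nsmul_eq_mul] at this
    exact (mul_eq_zero.mp this.symm).resolve_left (Nat.cast_ne_zero.mpr Fintype.card_ne_zero)
  rw [← sub_eq_zero, ← neg_sub, ha, ha0]
  exact neg_zero

variable [DecidableEq n]

theorem diag_eq (hL : L.IsSymm) (i : n) :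
    Lp i i = (Lp *ᵥ Pi.single i 1) ⬝ᵥ (L *ᵥ (Lp *ᵥ Pi.single i 1)) := by
  rw [(hLp.isSymm hL).mulVec_dotProduct_mulVec, mulVec_mulVec, hLp.pinv_mul_pinv,
    single_dotProduct, one_mul, mulVec_single_one, col_apply]

theorem diag_nonneg (hL : L.PosSemidef) (i : n) : 0 ≤ Lp i i :=
  hLp.diag_eq hL.isSymm i ▸ hL.dotProduct_mulVec_self_nonneg _

theorem sq_le_diag_mul [Nonempty n] (hL : L.PosSemidef) (hL1 : L *ᵥ (fun _ => 1) = 0)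
    (hker : ∀ v : n → ℝ, L *ᵥ v = 0 → ∃ a : ℝ, v = fun _ => a) {v : n → ℝ}
    (hv : ∑ i, v i = 0) (i : n) : v i ^ 2 ≤ Lp i i * (v ⬝ᵥ (L *ᵥ v)) := by
  have hvi : v i = (Lp *ᵥ Pi.single i 1) ⬝ᵥ (L *ᵥ v) := by
    rw [(hLp.isSymm hL.isSymm).mulVec_dotProduct_mulVec,
      hLp.pinv_mul_mulVec_of_sum_eq_zero hL1 hker hv, single_dotProduct, one_mul]
  rw [hvi, hLp.diag_eq hL.isSymm]
  exact hL.sq_dotProduct_mulVec_le _ _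

theorem mul_diag_le_one (hL : L.PosSemidef) {lam : ℝ}
    (hlam : ∀ i, hL.1.eigenvalues i ≠ 0 → lam ≤ hL.1.eigenvalues i) (i : n) :
    lam * Lp i i ≤ 1 := by
  set e : n → ℝ := Pi.single i 1
  calc lam * Lp i i = lam * ((Lp *ᵥ e) ⬝ᵥ (L *ᵥ (Lp *ᵥ e))) := by rw [hLp.diag_eq hL.isSymm]
    _ ≤ (L *ᵥ (Lp *ᵥ e)) ⬝ᵥ (L *ᵥ (Lp *ᵥ e)) := hL.smul_dotProduct_mulVec_le hlam _
    _ = ((L * Lp) *ᵥ e) ⬝ᵥ ((L * Lp) *ᵥ e) := by rw [mulVec_mulVec]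
    _ ≤ e ⬝ᵥ e := dotProduct_mulVec_self_le_of_isIdempotentElem hLp.isSymm_mul_pinv
      (by rw [IsIdempotentElem, ← Matrix.mul_assoc, hLp.mul_pinv_mul]) e
    _ = 1 := by simp [e]

end IsMoorePenroseInverse

end Matrix

theorem Finset.exists_sum_sub_sum_eq_sub {ι M : Type*} [DecidableEq ι] [AddCommGroup M]
    {S S' : Finset ι} (hcard : S.card = S'.card) (hdiff : (S \ S').card = 1) (f : ι → M) :
    ∃ p q, ∑ i ∈ S, f i - ∑ i ∈ S', f i = f p - f q := by
  obtain ⟨p, hp⟩ := Finset.card_eq_one.mp hdiff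
  obtain ⟨q, hq⟩ := Finset.card_eq_one.mp (Finset.card_sdiff_comm hcard ▸ hdiff)
  refine ⟨p, q, ?_⟩
  rw [← Finset.sum_inter_add_sum_sdiff S S', ← Finset.sum_inter_add_sum_sdiff S' S,
    Finset.inter_comm, hp, hq, Finset.sum_singleton, Finset.sum_singleton]
  abel

theorem abs_sq_sub_sq_le {a b y M : ℝ} (ha : |a - y| ≤ M) (hb : |b - y| ≤ M) :
    |(a - y) ^ 2 - (b - y) ^ 2| ≤ 2 * M * |a - b| := by
  have hsum : |(a - y) + (b - y)| ≤ 2 * M := (abs_add_le _ _).trans (by linarith)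
  calc |(a - y) ^ 2 - (b - y) ^ 2| = |(a - y) + (b - y)| * |a - b| := by
        rw [← abs_mul]; ring_nf
    _ ≤ 2 * M * |a - b| := by gcongr

section LaplacianObjective

variable {n : Type*} [Fintype n] {L : Matrix n n ℝ} {r : ℝ} {y : n → ℝ} {T : Finset n}

def laplacianObjective (L : Matrix n n ℝ) (r : ℝ) (y : n → ℝ) (T : Finset n) (g : n → ℝ) : ℝ :=
  g ⬝ᵥ (L *ᵥ g) + r * ∑ i ∈ T, (g i - y i) ^ 2

theorem laplacianObjective_add_smul (hL : L.IsSymm) (g δ : n → ℝ) (t : ℝ) :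
    laplacianObjective L r y T (g + t • δ) = laplacianObjective L r y T g
      + t * (2 * (δ ⬝ᵥ (L *ᵥ g) + r * ∑ i ∈ T, (g i - y i) * δ i))
      + t ^ 2 * (δ ⬝ᵥ (L *ᵥ δ) + r * ∑ i ∈ T, δ i ^ 2) := by
  have hsum : ∑ i ∈ T, ((g + t • δ) i - y i) ^ 2 = ∑ i ∈ T, (g i - y i) ^ 2
      + t * (2 * ∑ i ∈ T, (g i - y i) * δ i) + t ^ 2 * ∑ i ∈ T, δ i ^ 2 := by
    simp only [Finset.mul_sum, ← Finset.sum_add_distrib]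
    refine Finset.sum_congr rfl fun i _ => ?_
    simp only [Pi.add_apply, Pi.smul_apply, smul_eq_mul]
    ring
  simp only [laplacianObjective, hsum, mulVec_add, mulVec_smul, dotProduct_add, add_dotProduct,
    dotProduct_smul, smul_dotProduct, smul_eq_mul, hL.dotProduct_mulVec_comm g δ]
  ring

theorem laplacianObjective_add_le (hL : L.IsSymm) (hr : 0 ≤ r) {g δ : n → ℝ}
    (hmin : ∀ t : ℝ, laplacianObjective L r y T g ≤ laplacianObjective L r y T (g + t • δ)) :
    laplacianObjective L r y T g + δ ⬝ᵥ (L *ᵥ δ) ≤ laplacianObjective L r y T (g + δ) := by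
  have h1 := laplacianObjective_add_smul (r := r) (y := y) (T := T) hL g δ 1
  rw [one_smul, one_mul, one_pow, one_mul] at h1
  set a := δ ⬝ᵥ (L *ᵥ δ) + r * ∑ i ∈ T, δ i ^ 2
  set b := 2 * (δ ⬝ᵥ (L *ᵥ g) + r * ∑ i ∈ T, (g i - y i) * δ i)
  have hb : b = 0 := by
    have hq : ∀ t : ℝ, 0 ≤ a * (t * t) + b * t + 0 := fun t => by
      have := hmin t
      rw [laplacianObjective_add_smul hL] at this
      linarith
    have := discrim_le_zero hq
    rw [discrim] at this
    nlinarith [sq_nonneg b]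
  have : 0 ≤ r * ∑ i ∈ T, δ i ^ 2 := mul_nonneg hr (Finset.sum_nonneg fun i _ => sq_nonneg _)
  rw [h1, hb]
  linarith

theorem two_mul_dotProduct_mulVec_sub_le (hL : L.IsSymm) (hr : 0 ≤ r) {T' : Finset n} {g g' : n → ℝ}
    (hg : ∑ i, g i = 0) (hg' : ∑ i, g' i = 0)
    (hmin : IsMinOn (laplacianObjective L r y T) {v | ∑ i, v i = 0} g)
    (hmin' : IsMinOn (laplacianObjective L r y T') {v | ∑ i, v i = 0} g') :
    2 * ((g' - g) ⬝ᵥ (L *ᵥ (g' - g))) ≤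
      r * (∑ i ∈ T, ((g' i - y i) ^ 2 - (g i - y i) ^ 2)
        - ∑ i ∈ T', ((g' i - y i) ^ 2 - (g i - y i) ^ 2)) := by
  have hline {v w : n → ℝ} (hv : ∑ i, v i = 0) (hw : ∑ i, w i = 0) (t : ℝ) :
      v + t • w ∈ {v : n → ℝ | ∑ i, v i = 0} := by
    simp [Finset.sum_add_distrib, ← Finset.mul_sum, hv, hw]
  have hΔ : ∑ i, (g' - g) i = 0 := by simp [Finset.sum_sub_distrib, hg, hg']
  have hΔneg : ∑ i, (-(g' - g)) i = 0 := by simp [Finset.sum_sub_distrib, hg, hg']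
  have h1 := laplacianObjective_add_le hL hr fun t => isMinOn_iff.mp hmin _ (hline hg hΔ t)
  have h2 := laplacianObjective_add_le hL hr fun t => isMinOn_iff.mp hmin' _ (hline hg' hΔneg t)
  rw [add_sub_cancel] at h1
  rw [show g' + -(g' - g) = g by abel, mulVec_neg, neg_dotProduct, dotProduct_neg, neg_neg] at h2
  simp only [laplacianObjective, Finset.sum_sub_distrib] at h1 h2 ⊢
  linarith

theorem abs_sub_le_of_isMinOn [DecidableEq n] (hL : L.IsSymm) {κ : ℝ} (hκ : 0 ≤ κ)
    (hcoord : ∀ v : n → ℝ, ∑ i, v i = 0 → ∀ i, v i ^ 2 ≤ κ * (v ⬝ᵥ (L *ᵥ v)))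
    (hr : 0 ≤ r) {S S' : Finset n} (hcard : S.card = S'.card)
    (hdiff : (S \ S').card = 1) {g g' : n → ℝ} (hg : ∑ i, g i = 0) (hg' : ∑ i, g' i = 0)
    (hmin : IsMinOn (laplacianObjective L r y S) {v | ∑ i, v i = 0} g)
    (hmin' : IsMinOn (laplacianObjective L r y S') {v | ∑ i, v i = 0} g')
    {M : ℝ} (hb : ∀ i, |g i - y i| ≤ M) (hb' : ∀ i, |g' i - y i| ≤ M) (i : n) :
    |g' i - g i| ≤ 2 * M * r * κ := by
  set Δ := g' - g
  have hΔ : ∑ j, Δ j = 0 := by simp [Δ, Finset.sum_sub_distrib, hg, hg']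
  have hM : 0 ≤ M := (abs_nonneg _).trans (hb i)
  obtain ⟨i₀, -, hmax⟩ := Finset.univ.exists_max_image (fun j => |Δ j|) ⟨i, Finset.mem_univ i⟩
  have hloss (j : n) : |(g' j - y j) ^ 2 - (g j - y j) ^ 2| ≤ 2 * M * |Δ i₀| :=
    (abs_sq_sub_sq_le (hb' j) (hb j)).trans
      (mul_le_mul_of_nonneg_left (hmax j (Finset.mem_univ j)) (by positivity))
  have hE : Δ ⬝ᵥ (L *ᵥ Δ) ≤ r * (2 * M * |Δ i₀|) := by
    obtain ⟨p, q, hpq⟩ := Finset.exists_sum_sub_sum_eq_sub hcard hdiff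
      (fun j => (g' j - y j) ^ 2 - (g j - y j) ^ 2)
    have h := two_mul_dotProduct_mulVec_sub_le hL hr hg hg' hmin hmin'
    rw [hpq] at h
    have := mul_le_mul_of_nonneg_left
      (sub_le_sub (abs_le.mp (hloss p)).2 (abs_le.mp (hloss q)).1) hr
    linarith
  have hβ : |Δ i₀| ^ 2 ≤ 2 * M * r * κ * |Δ i₀| := by
    calc |Δ i₀| ^ 2 ≤ κ * (Δ ⬝ᵥ (L *ᵥ Δ)) := by rw [sq_abs]; exact hcoord Δ hΔ i₀
      _ ≤ κ * (r * (2 * M * |Δ i₀|)) := by gcongr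
      _ = 2 * M * r * κ * |Δ i₀| := by ring
  have : 0 ≤ 2 * M * r * κ := by positivity
  exact (hmax i (Finset.mem_univ i)).trans (by nlinarith [abs_nonneg (Δ i₀)])

end LaplacianObjective

theorem stmt_15_general {m u : ℕ} (hm : 0 < m)
    (L Lp : Matrix (Fin (m + u)) (Fin (m + u)) ℝ) (hL : L.PosSemidef)
    (hL1 : L *ᵥ (fun _ => 1) = 0)
    (hker : ∀ v : Fin (m + u) → ℝ, L *ᵥ v = 0 → ∃ a : ℝ, v = fun _ => a)
    (hp1 : L * Lp * L = L) (hp2 : Lp * L * Lp = Lp)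
    (hp3 : (L * Lp)ᵀ = L * Lp) (hp4 : (Lp * L)ᵀ = Lp * L)
    (lam2 : ℝ) (hlam2mem : ∃ i, hL.1.eigenvalues i = lam2) (hlam2ne : lam2 ≠ 0)
    (hlam2min : ∀ i, hL.1.eigenvalues i ≠ 0 → lam2 ≤ hL.1.eigenvalues i)
    (C M : ℝ) (hC : 0 ≤ C)
    (y : Fin (m + u) → ℝ)
    (S S' : Finset (Fin (m + u))) (hS : S.card = m) (hS' : S'.card = m)
    (hdiff : (S \ S').card = 1)
    (h h' : Fin (m + u) → ℝ)
    (hsum : ∑ i, h i = 0) (hsum' : ∑ i, h' i = 0)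
    (hmin : ∀ g : Fin (m + u) → ℝ, ∑ i, g i = 0 →
      h ⬝ᵥ (L *ᵥ h) + (C / m) * ∑ i ∈ S, (h i - y i) ^ 2 ≤
        g ⬝ᵥ (L *ᵥ g) + (C / m) * ∑ i ∈ S, (g i - y i) ^ 2)
    (hmin' : ∀ g : Fin (m + u) → ℝ, ∑ i, g i = 0 →
      h' ⬝ᵥ (L *ᵥ h') + (C / m) * ∑ i ∈ S', (h' i - y i) ^ 2 ≤
        g ⬝ᵥ (L *ᵥ g) + (C / m) * ∑ i ∈ S', (g i - y i) ^ 2)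
    (hb : ∀ i, |h i - y i| ≤ M) (hb' : ∀ i, |h' i - y i| ≤ M)
    (ksq : ℝ) (hksq : ksq = ⨆ i, Lp i i) :
    (∀ i, |(h i - y i) ^ 2 - (h' i - y i) ^ 2| ≤ (4 * C * M ^ 2 / m) * ksq) ∧
    ksq ≤ 1 / lam2 ∧
    (4 * C * M ^ 2 / m) * ksq ≤ 4 * C * M ^ 2 / ((m : ℝ) * lam2) := by
  have hLp : IsMoorePenroseInverse L Lp := ⟨hp1, hp2, hp3, hp4⟩
  have i₀ : Fin (m + u) := ⟨0, by omega⟩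
  have : Nonempty (Fin (m + u)) := ⟨i₀⟩
  have hdiag_le (i) : Lp i i ≤ ksq :=
    hksq ▸ le_ciSup (f := fun i => Lp i i) (Finite.bddAbove_range _) i
  have hcoord (v : Fin (m + u) → ℝ) (hv : ∑ i, v i = 0) (i) : v i ^ 2 ≤ ksq * (v ⬝ᵥ (L *ᵥ v)) :=
    (hLp.sq_le_diag_mul hL hL1 hker hv i).trans
      (mul_le_mul_of_nonneg_right (hdiag_le i) (hL.dotProduct_mulVec_self_nonneg v))
  have hstab := abs_sub_le_of_isMinOn hL.isSymm ((hLp.diag_nonneg hL i₀).trans (hdiag_le i₀))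
    hcoord (by positivity) (hS.trans hS'.symm) hdiff hsum hsum' (isMinOn_iff.mpr hmin)
    (isMinOn_iff.mpr hmin') hb hb'
  obtain ⟨j, rfl⟩ := hlam2mem
  have hlam2 : 0 < hL.1.eigenvalues j := (hL.eigenvalues_nonneg j).lt_of_ne' hlam2ne
  have hksq_le : ksq ≤ 1 / hL.1.eigenvalues j := hksq ▸ ciSup_le fun i => by
    rw [le_div_iff₀ hlam2, mul_comm]
    exact hLp.mul_diag_le_one hL hlam2min i
  refine ⟨fun i => ?_, hksq_le, ?_⟩
  · calc |(h i - y i) ^ 2 - (h' i - y i) ^ 2| ≤ 2 * M * |h' i - h i| := by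
          rw [abs_sub_comm (h' i)]; exact abs_sq_sub_sq_le (hb i) (hb' i)
      _ ≤ 2 * M * (2 * M * (C / m) * ksq) :=
          mul_le_mul_of_nonneg_left (hstab i) (by linarith [(abs_nonneg _).trans (hb i)])
      _ = (4 * C * M ^ 2 / m) * ksq := by ring
  · calc (4 * C * M ^ 2 / m) * ksq ≤ (4 * C * M ^ 2 / m) * (1 / hL.1.eigenvalues j) := by
          gcongr
      _ = 4 * C * M ^ 2 / ((m : ℝ) * hL.1.eigenvalues j) := by ring

/-- Theorem 17: uniform cost stability of the graph Laplacian regularization algorithm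
of Belkin et al.  `L` is the Laplacian of a connected weighted graph on `n = m + u`
vertices (symmetric positive semidefinite, `L𝟙 = 0`, null space spanned by `𝟙`), `Lp`
its Moore–Penrose pseudoinverse (four Penrose conditions), `lam2` its smallest nonzero
eigenvalue, and `κ² = max_i (L⁺)_{ii}`.  If `h` and `h'` minimize the objective
`hᵀLh + (C/m)Σ_{i∈S}(h_i − y_i)²` (resp. with `S'`) over `{h : 𝟙ᵀh = 0}`, where `S, S'`
are size-`m` training sets differing in exactly one vertex, and the hypotheses are
bounded (`|h_i − y_i| ≤ M`, `|h'_i − y_i| ≤ M`), then for every `i`,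
`|(h_i − y_i)² − (h'_i − y_i)²| ≤ (4CM²/m)κ²`; moreover `κ² ≤ 1/λ₂`, so the bound is at
most `4CM²/(mλ₂)`. -/
theorem stmt_15 {m u : ℕ} (hm : 0 < m) (hu : 0 < u)
    (L Lp : Matrix (Fin (m + u)) (Fin (m + u)) ℝ) (hL : L.PosSemidef)
    (hL1 : L *ᵥ (fun _ => 1) = 0)
    (hker : ∀ v : Fin (m + u) → ℝ, L *ᵥ v = 0 → ∃ a : ℝ, v = fun _ => a)
    (hp1 : L * Lp * L = L) (hp2 : Lp * L * Lp = Lp)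
    (hp3 : (L * Lp)ᵀ = L * Lp) (hp4 : (Lp * L)ᵀ = Lp * L)
    (lam2 : ℝ) (hlam2mem : ∃ i, hL.1.eigenvalues i = lam2) (hlam2ne : lam2 ≠ 0)
    (hlam2min : ∀ i, hL.1.eigenvalues i ≠ 0 → lam2 ≤ hL.1.eigenvalues i)
    (C M : ℝ) (hC : 0 ≤ C)
    (y : Fin (m + u) → ℝ) (hy : ∀ i, |y i| ≤ M)
    (S S' : Finset (Fin (m + u))) (hS : S.card = m) (hS' : S'.card = m)
    (hdiff : (S \ S').card = 1)
    (h h' : Fin (m + u) → ℝ)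
    (hsum : ∑ i, h i = 0) (hsum' : ∑ i, h' i = 0)
    (hmin : ∀ g : Fin (m + u) → ℝ, ∑ i, g i = 0 →
      h ⬝ᵥ (L *ᵥ h) + (C / m) * ∑ i ∈ S, (h i - y i) ^ 2 ≤
        g ⬝ᵥ (L *ᵥ g) + (C / m) * ∑ i ∈ S, (g i - y i) ^ 2)
    (hmin' : ∀ g : Fin (m + u) → ℝ, ∑ i, g i = 0 →
      h' ⬝ᵥ (L *ᵥ h') + (C / m) * ∑ i ∈ S', (h' i - y i) ^ 2 ≤
        g ⬝ᵥ (L *ᵥ g) + (C / m) * ∑ i ∈ S', (g i - y i) ^ 2)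
    (hb : ∀ i, |h i - y i| ≤ M) (hb' : ∀ i, |h' i - y i| ≤ M)
    (ksq : ℝ) (hksq : ksq = ⨆ i, Lp i i) :
    (∀ i, |(h i - y i) ^ 2 - (h' i - y i) ^ 2| ≤ (4 * C * M ^ 2 / m) * ksq) ∧
    ksq ≤ 1 / lam2 ∧
    (4 * C * M ^ 2 / m) * ksq ≤ 4 * C * M ^ 2 / ((m : ℝ) * lam2) :=
  stmt_15_general hm L Lp hL hL1 hker hp1 hp2 hp3 hp4 lam2 hlam2mem hlam2ne hlam2min C M hC y S S'
    hS hS' hdiff h h' hsum hsum' hmin hmin' hb hb' ksq hksq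
end

section
/- Let n ≥ 2, and let α_1, …, α_n and y_1, …, y_n satisfy 0 < α_min ≤ α_i ≤ α_max and |y_i| ≤ M for all i. Then removing the n-th pair changes the weighted-average estimate by at most 2α_max·M/(α_min·n): |(Σ_{i=1}^n α_i y_i)/(Σ_{i=1}^n α_i) − (Σ_{i=1}^{n−1} α_i y_i)/(Σ_{i=1}^{n−1} α_i)| ≤ 2α_max·M/(α_min·n). Consequently, if two collections (α_i, y_i)_{i=1}^n and (α'_i, y'_i)_{i=1}^n both satisfy these bounds and differ at exactly one index, their weighted-average estimates differ by at most 4α_max·M/(α_min·n). -/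
/-!
The weighted average is the center of mass of the labels. Adding the point `i` to the
remaining ones moves their center of mass `c` towards `y i` by the fraction
`α i / ∑ α ≤ αmax / (αmin * n)` of the distance `|y i - c| ≤ 2 * M`. Two collections that
differ only at `i₀` share the center of mass of the other points, so the triangle inequality
through it doubles the bound.
-/

open Finset

section CenterMass

variable {ι R E : Type*}

lemma Finset.sum_mul_div_sum_eq_centerMass (s : Finset ι) (w z : ι → ℝ) :
    (∑ i ∈ s, w i * z i) / ∑ i ∈ s, w i = s.centerMass w z := by
  rw [centerMass, div_eq_inv_mul]
  rfl

variable [Field R] [AddCommGroup E] [Module R E]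

lemma Finset.centerMass_sub_centerMass_erase [DecidableEq ι] {s : Finset ι} {w : ι → R}
    (z : ι → E) {i : ι} (hi : i ∈ s) (hs : ∑ j ∈ s, w j ≠ 0)
    (hs' : ∑ j ∈ s.erase i, w j ≠ 0) :
    s.centerMass w z - (s.erase i).centerMass w z =
      (w i / ∑ j ∈ s, w j) • (z i - (s.erase i).centerMass w z) := by
  have hsum : w i + ∑ j ∈ s.erase i, w j = ∑ j ∈ s, w j := add_sum_erase s w hi
  have hrest : (∑ j ∈ s.erase i, w j) / ∑ j ∈ s, w j = 1 - w i / ∑ j ∈ s, w j := by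
    rw [eq_sub_iff_add_eq, ← add_div, add_comm, hsum, div_self hs]
  have hinsert := centerMass_insert i (s.erase i) z (notMem_erase i s) hs'
  rw [insert_erase hi, hsum, hrest] at hinsert
  rw [hinsert]
  module

end CenterMass

section WeightedAverage

variable {ι : Type*} {s : Finset ι} {w z : ι → ℝ} {M : ℝ}

lemma abs_centerMass_le (hw : ∀ i ∈ s, 0 ≤ w i) (hs : 0 < ∑ i ∈ s, w i)
    (hz : ∀ i ∈ s, |z i| ≤ M) : |s.centerMass w z| ≤ M :=
  abs_le.2 <| (convex_Icc (-M) M).centerMass_mem hw hs fun i hi => abs_le.1 (hz i hi)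

lemma abs_centerMass_sub_centerMass_erase_le [DecidableEq ι] {i : ι} {wmin wmax : ℝ}
    (hwmin : 0 < wmin) (hw : ∀ j ∈ s, wmin ≤ w j ∧ w j ≤ wmax) (hz : ∀ j ∈ s, |z j| ≤ M)
    (hi : i ∈ s) (hs : (s.erase i).Nonempty) :
    |s.centerMass w z - (s.erase i).centerMass w z| ≤ 2 * wmax * M / (wmin * #s) := by
  have hpos : ∀ j ∈ s, 0 < w j := fun j hj => hwmin.trans_le (hw j hj).1
  have hsum_erase : 0 < ∑ j ∈ s.erase i, w j :=
    sum_pos (fun j hj => hpos j (mem_of_mem_erase hj)) hs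
  have hsum : 0 < ∑ j ∈ s, w j := sum_pos hpos ⟨i, hi⟩
  have hsum_ge : wmin * #s ≤ ∑ j ∈ s, w j := by
    simpa [nsmul_eq_mul, mul_comm] using card_nsmul_le_sum s w wmin fun j hj => (hw j hj).1
  have hfrac : w i / ∑ j ∈ s, w j ≤ wmax / (wmin * #s) :=
    div_le_div₀ ((hpos i hi).le.trans (hw i hi).2) (hw i hi).2
      (mul_pos hwmin (Nat.cast_pos.2 (card_pos.2 ⟨i, hi⟩))) hsum_ge
  have hdist : |z i - (s.erase i).centerMass w z| ≤ 2 * M := by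
    have hc := abs_centerMass_le (fun j hj => (hpos j (mem_of_mem_erase hj)).le) hsum_erase
      fun j hj => hz j (mem_of_mem_erase hj)
    linarith [abs_sub (z i) ((s.erase i).centerMass w z), hz i hi]
  rw [centerMass_sub_centerMass_erase z hi hsum.ne' hsum_erase.ne', smul_eq_mul, abs_mul,
    abs_of_pos (div_pos (hpos i hi) hsum)]
  calc (w i / ∑ j ∈ s, w j) * |z i - (s.erase i).centerMass w z|
      ≤ wmax / (wmin * #s) * (2 * M) :=
        mul_le_mul hfrac hdist (abs_nonneg _) ((div_pos (hpos i hi) hsum).le.trans hfrac)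
    _ = 2 * wmax * M / (wmin * #s) := by ring

end WeightedAverage

/-- Lemma 21: stability of the weighted-average local estimator.  For `n ≥ 2`, weights
`α_i ∈ [αmin, αmax]` with `αmin > 0` and labels `|y_i| ≤ M` (indices `i < n`),
removing the `n`-th pair changes the weighted-average estimate by at most
`2·αmax·M/(αmin·n)`; consequently, if a second collection `(α', y')` satisfies the same
bounds and differs from `(α, y)` at exactly one index, the two estimates differ by at
most `4·αmax·M/(αmin·n)`. -/
theorem stmt_17 (n : ℕ) (hn : 2 ≤ n) (α y α' y' : ℕ → ℝ)
    (αmin αmax M : ℝ) (hαmin : 0 < αmin)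
    (hα : ∀ i < n, αmin ≤ α i ∧ α i ≤ αmax) (hy : ∀ i < n, |y i| ≤ M)
    (hα' : ∀ i < n, αmin ≤ α' i ∧ α' i ≤ αmax) (hy' : ∀ i < n, |y' i| ≤ M)
    (i₀ : ℕ) (hi₀ : i₀ < n)
    (hdiff : ∀ i < n, i ≠ i₀ → α i = α' i ∧ y i = y' i) :
    |(∑ i ∈ Finset.range n, α i * y i) / (∑ i ∈ Finset.range n, α i) -
        (∑ i ∈ Finset.range (n - 1), α i * y i) / (∑ i ∈ Finset.range (n - 1), α i)| ≤
      2 * αmax * M / (αmin * n) ∧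
    |(∑ i ∈ Finset.range n, α i * y i) / (∑ i ∈ Finset.range n, α i) -
        (∑ i ∈ Finset.range n, α' i * y' i) / (∑ i ∈ Finset.range n, α' i)| ≤
      4 * αmax * M / (αmin * n) := by
  simp only [sum_mul_div_sum_eq_centerMass]
  have hbound {a b : ℕ → ℝ} {i : ℕ} (ha : ∀ i < n, αmin ≤ a i ∧ a i ≤ αmax)
      (hb : ∀ i < n, |b i| ≤ M) (hi : i < n) :
      |(range n).centerMass a b - ((range n).erase i).centerMass a b| ≤
        2 * αmax * M / (αmin * n) := by
    simpa only [card_range] using abs_centerMass_sub_centerMass_erase_le hαmin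
      (fun j hj => ha j (mem_range.1 hj)) (fun j hj => hb j (mem_range.1 hj)) (mem_range.2 hi)
      (card_pos.1 (by rw [card_erase_of_mem (mem_range.2 hi), card_range]; omega))
  have hlast : (range n).erase (n - 1) = range (n - 1) := by
    conv_lhs => rw [← Nat.sub_add_cancel (by omega : 1 ≤ n), range_add_one]
    exact erase_insert notMem_range_self
  have hagree : ((range n).erase i₀).centerMass α y = ((range n).erase i₀).centerMass α' y' :=
    centerMass_congr fun i hi => by
      obtain ⟨hne, hlt⟩ := mem_erase.1 (hi.elim And.left And.left)
      exact ⟨by simp [hne, hlt], hdiff i (mem_range.1 hlt) hne⟩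
  refine ⟨hlast ▸ hbound hα hy (by omega), ?_⟩
  have hmoved := hbound hα hy hi₀
  have hmoved' := hbound hα' hy' hi₀
  rw [← hagree, abs_sub_comm] at hmoved'
  calc _ ≤ _ := abs_sub_le _ (((range n).erase i₀).centerMass α y) _
    _ ≤ 2 * αmax * M / (αmin * n) + 2 * αmax * M / (αmin * n) := add_le_add hmoved hmoved'
    _ = 4 * αmax * M / (αmin * n) := by ring
end

section
/- Let x', x_1, …, x_n be points of ℝ^d with ‖x_i − x'‖ ≤ 2r for all i (for instance, all points lie in a ball of radius r), let σ > 0, and define Gaussian-kernel weights α_i = exp(−‖x_i − x'‖²/(2σ²)). Then e^{−2r²/σ²} ≤ α_i ≤ 1 for all i, and for labels bounded by M (|y_i| ≤ M), changing exactly one (point, label) pair changes the weighted-average estimate by at most 4M·e^{2r²/σ²}/n. -/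
/-!
Each Gaussian weight lies in `[a, 1]` with `a = e^{-2r²/σ²}`, since `‖x_i - x'‖² ≤ 4r²`.
Hence both weight sums are at least `n a`, while the two collections differ in one summand,
so the weight sums differ by at most `1` and the weighted label sums by at most `2M`.
Writing `A/S - A'/S' = ((A/S)(S' - S) + (A - A'))/S'` and using `|A/S| ≤ M` gives
`|ŷ - ŷ'| ≤ 3M/(n a) ≤ 4M e^{2r²/σ²}/n`.
-/

open Finset

lemma exp_neg_sq_div_le_of_norm_le {E : Type*} [SeminormedAddCommGroup E] {v : E} {r : ℝ}
    (hv : ‖v‖ ≤ 2 * r) (σ : ℝ) :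
    Real.exp (-2 * r ^ 2 / σ ^ 2) ≤ Real.exp (-‖v‖ ^ 2 / (2 * σ ^ 2)) ∧
      Real.exp (-‖v‖ ^ 2 / (2 * σ ^ 2)) ≤ 1 := by
  have hv_sq : ‖v‖ ^ 2 ≤ (2 * r) ^ 2 := pow_le_pow_left₀ (norm_nonneg v) hv 2
  constructor
  · rw [Real.exp_le_exp, show -2 * r ^ 2 / σ ^ 2 = -(2 * r) ^ 2 / (2 * σ ^ 2) by
      field_simp, neg_div, neg_div, neg_le_neg_iff]
    exact div_le_div_of_nonneg_right hv_sq (by positivity)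
  · exact Real.exp_le_one_iff.mpr (div_nonpos_of_nonpos_of_nonneg (by simp) (by positivity))

lemma Finset.sum_sub_sum_eq_of_eq_of_ne {ι G : Type*} [AddCommGroup G] {s : Finset ι}
    {f g : ι → G} {i₀ : ι} (h₀ : i₀ ∈ s) (h : ∀ i ∈ s, i ≠ i₀ → f i = g i) :
    ∑ i ∈ s, f i - ∑ i ∈ s, g i = f i₀ - g i₀ := by
  rw [← sum_sub_distrib]
  exact sum_eq_single_of_mem i₀ h₀ fun i hi hne => by rw [h i hi hne, sub_self]

lemma abs_weighted_sum_le {ι : Type*} {s : Finset ι} {α y : ι → ℝ} {M : ℝ}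
    (hα : ∀ i ∈ s, 0 ≤ α i) (hy : ∀ i ∈ s, |y i| ≤ M) :
    |∑ i ∈ s, α i * y i| ≤ M * ∑ i ∈ s, α i := by
  rw [mul_sum]
  refine (abs_sum_le_sum_abs _ _).trans (sum_le_sum fun i hi => ?_)
  rw [abs_mul, abs_of_nonneg (hα i hi), mul_comm]
  exact mul_le_mul_of_nonneg_right (hy i hi) (hα i hi)

lemma abs_div_sub_div_le {A A' S S' M δ ε : ℝ} (hS : 0 < S) (hS' : 0 < S')
    (hA : |A| ≤ M * S) (hδ : |S - S'| ≤ δ) (hε : |A - A'| ≤ ε) :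
    |A / S - A' / S'| ≤ (M * δ + ε) / S' := by
  have hAS : |A / S| ≤ M := by rwa [abs_div, abs_of_pos hS, div_le_iff₀ hS]
  have hsplit : A / S - A' / S' = (A / S * (S' - S) + (A - A')) / S' := by
    field_simp; ring
  rw [hsplit, abs_div, abs_of_pos hS']
  gcongr
  calc |A / S * (S' - S) + (A - A')| ≤ |A / S| * |S - S'| + |A - A'| := by
        rw [abs_sub_comm S, ← abs_mul]; exact abs_add_le _ _
    _ ≤ M * δ + ε :=
        add_le_add (mul_le_mul hAS hδ (abs_nonneg _) ((abs_nonneg _).trans hAS)) hε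

noncomputable def weightedAverage {ι : Type*} (s : Finset ι) (α y : ι → ℝ) : ℝ :=
  (∑ i ∈ s, α i * y i) / ∑ i ∈ s, α i

lemma abs_weightedAverage_sub_le {ι : Type*} {s : Finset ι} {α α' y y' : ι → ℝ} {a M : ℝ}
    (ha : 0 < a) (hα : ∀ i ∈ s, a ≤ α i ∧ α i ≤ 1) (hα' : ∀ i ∈ s, a ≤ α' i ∧ α' i ≤ 1)
    (hy : ∀ i ∈ s, |y i| ≤ M) (hy' : ∀ i ∈ s, |y' i| ≤ M) {i₀ : ι} (hi₀ : i₀ ∈ s)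
    (hdiff : ∀ i ∈ s, i ≠ i₀ → α i = α' i ∧ y i = y' i) :
    |weightedAverage s α y - weightedAverage s α' y'| ≤ 3 * M / (#s * a) := by
  have hα_nonneg : ∀ i ∈ s, 0 ≤ α i := fun i hi => ha.le.trans (hα i hi).1
  have hna : 0 < #s * a := mul_pos (Nat.cast_pos.mpr (card_pos.mpr ⟨i₀, hi₀⟩)) ha
  have hS : #s * a ≤ ∑ i ∈ s, α i := by
    simpa using card_nsmul_le_sum s α a fun i hi => (hα i hi).1
  have hS' : #s * a ≤ ∑ i ∈ s, α' i := by
    simpa using card_nsmul_le_sum s α' a fun i hi => (hα' i hi).1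
  have hdS : |∑ i ∈ s, α i - ∑ i ∈ s, α' i| ≤ 1 := by
    rw [sum_sub_sum_eq_of_eq_of_ne hi₀ fun i hi hne => (hdiff i hi hne).1, abs_le]
    constructor <;> linarith [hα i₀ hi₀, hα' i₀ hi₀]
  have hterm : ∀ {β z : ι → ℝ}, (∀ i ∈ s, a ≤ β i ∧ β i ≤ 1) → (∀ i ∈ s, |z i| ≤ M) →
      |β i₀ * z i₀| ≤ M := fun hβ hz => by
    rw [abs_mul, abs_of_nonneg (ha.le.trans (hβ i₀ hi₀).1)]
    exact (mul_le_of_le_one_left (abs_nonneg _) (hβ i₀ hi₀).2).trans (hz i₀ hi₀)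
  have hdA : |∑ i ∈ s, α i * y i - ∑ i ∈ s, α' i * y' i| ≤ 2 * M := by
    rw [sum_sub_sum_eq_of_eq_of_ne hi₀ fun i hi hne => by
      rw [(hdiff i hi hne).1, (hdiff i hi hne).2]]
    linarith [abs_sub (α i₀ * y i₀) (α' i₀ * y' i₀), hterm hα hy, hterm hα' hy']
  calc |weightedAverage s α y - weightedAverage s α' y'|
      ≤ (M * 1 + 2 * M) / ∑ i ∈ s, α' i :=
        abs_div_sub_div_le (hna.trans_le hS) (hna.trans_le hS')
          (abs_weighted_sum_le hα_nonneg hy) hdS hdA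
    _ ≤ 3 * M / (#s * a) := by
        rw [show M * 1 + 2 * M = 3 * M by ring]
        have hM : 0 ≤ M := (abs_nonneg _).trans (hy i₀ hi₀)
        gcongr

theorem stmt_18_general {d : ℕ} (n : ℕ)
    (x' : EuclideanSpace ℝ (Fin d)) (x : ℕ → EuclideanSpace ℝ (Fin d))
    (r σ M : ℝ)
    (hx : ∀ i < n, ‖x i - x'‖ ≤ 2 * r)
    (α : ℕ → ℝ) (hα : ∀ i, α i = Real.exp (-‖x i - x'‖ ^ 2 / (2 * σ ^ 2)))
    (y y' : ℕ → ℝ) (hy : ∀ i < n, |y i| ≤ M) (hy' : ∀ i < n, |y' i| ≤ M)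
    (α' : ℕ → ℝ) (hα' : ∀ i < n, Real.exp (-2 * r ^ 2 / σ ^ 2) ≤ α' i ∧ α' i ≤ 1)
    (i₀ : ℕ) (hi₀ : i₀ < n)
    (hdiff : ∀ i < n, i ≠ i₀ → α i = α' i ∧ y i = y' i) :
    (∀ i < n, Real.exp (-2 * r ^ 2 / σ ^ 2) ≤ α i ∧ α i ≤ 1) ∧
    |(∑ i ∈ Finset.range n, α i * y i) / (∑ i ∈ Finset.range n, α i) -
        (∑ i ∈ Finset.range n, α' i * y' i) / (∑ i ∈ Finset.range n, α' i)| ≤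
      4 * M * Real.exp (2 * r ^ 2 / σ ^ 2) / n := by
  have hbounds : ∀ i < n, Real.exp (-2 * r ^ 2 / σ ^ 2) ≤ α i ∧ α i ≤ 1 := fun i hi =>
    hα i ▸ exp_neg_sq_div_le_of_norm_le (hx i hi) σ
  refine ⟨hbounds, ?_⟩
  have hM : 0 ≤ M := (abs_nonneg _).trans (hy i₀ hi₀)
  have hstab := abs_weightedAverage_sub_le (Real.exp_pos _)
    (fun i hi => hbounds i (mem_range.mp hi)) (fun i hi => hα' i (mem_range.mp hi))
    (fun i hi => hy i (mem_range.mp hi)) (fun i hi => hy' i (mem_range.mp hi))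
    (mem_range.mpr hi₀) (fun i hi => hdiff i (mem_range.mp hi))
  have hexp : Real.exp (-2 * r ^ 2 / σ ^ 2) = (Real.exp (2 * r ^ 2 / σ ^ 2))⁻¹ := by
    rw [← Real.exp_neg, neg_mul, neg_div]
  calc |weightedAverage (range n) α y - weightedAverage (range n) α' y'|
      ≤ 3 * M / (n * Real.exp (-2 * r ^ 2 / σ ^ 2)) := by simpa using hstab
    _ = 3 * M * Real.exp (2 * r ^ 2 / σ ^ 2) / n := by rw [hexp]; field_simp
    _ ≤ 4 * M * Real.exp (2 * r ^ 2 / σ ^ 2) / n := by gcongr; linarith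

/-- Corollary 22: stability of the kernelized weighted-average local estimator with a
Gaussian kernel.  Points `x_1, …, x_n` satisfy `‖x_i − x'‖ ≤ 2r`, `σ > 0`, and the
weights are `α_i = exp(−‖x_i − x'‖²/(2σ²))`.  Then `e^{−2r²/σ²} ≤ α_i ≤ 1`, and for
labels bounded by `M`, changing exactly one (point, label) pair (i.e. comparing with a
second collection `(α', y')` satisfying the same bounds and differing at exactly one
index) changes the weighted-average estimate by at most `4M·e^{2r²/σ²}/n`. -/
theorem stmt_18 {d : ℕ} (n : ℕ) (hn : 0 < n)
    (x' : EuclideanSpace ℝ (Fin d)) (x : ℕ → EuclideanSpace ℝ (Fin d))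
    (r σ M : ℝ) (hσ : 0 < σ)
    (hx : ∀ i < n, ‖x i - x'‖ ≤ 2 * r)
    (α : ℕ → ℝ) (hα : ∀ i, α i = Real.exp (-‖x i - x'‖ ^ 2 / (2 * σ ^ 2)))
    (y y' : ℕ → ℝ) (hy : ∀ i < n, |y i| ≤ M) (hy' : ∀ i < n, |y' i| ≤ M)
    (α' : ℕ → ℝ) (hα' : ∀ i < n, Real.exp (-2 * r ^ 2 / σ ^ 2) ≤ α' i ∧ α' i ≤ 1)
    (i₀ : ℕ) (hi₀ : i₀ < n)
    (hdiff : ∀ i < n, i ≠ i₀ → α i = α' i ∧ y i = y' i) :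
    (∀ i < n, Real.exp (-2 * r ^ 2 / σ ^ 2) ≤ α i ∧ α i ≤ 1) ∧
    |(∑ i ∈ Finset.range n, α i * y i) / (∑ i ∈ Finset.range n, α i) -
        (∑ i ∈ Finset.range n, α' i * y' i) / (∑ i ∈ Finset.range n, α' i)| ≤
      4 * M * Real.exp (2 * r ^ 2 / σ ^ 2) / n :=
  stmt_18_general n x' x r σ M hx α hα y y' hy hy' α' hα' i₀ hi₀ hdiff
end

section
/- Let x', x_1, …, x_n be points of a real normed space with ‖x_i − x'‖ ≤ 2r for all i, and define inverse-distance weights α_i = 1/(1 + ‖x_i − x'‖). Then 1/(1+2r) ≤ α_i ≤ 1 for all i, and for labels bounded by M (|y_i| ≤ M), removing one (point, label) pair changes the weighted-average estimate by at most 2(2r+1)·M/n. -/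
/-!
Writing `A / S` for the weighted average of the first `n - 1` pairs, adding the `n`-th pair
(weight `a`, label `z`) changes it by `a (z S - A) / (S (S + a))`, and `|z S - A| ≤ 2 M S`, so
the change is at most `2 M a / (S + a)`. Since `a ≤ 1` and every weight is at least
`1 / (1 + 2r)`, the total weight `S + a` is at least `n / (1 + 2r)`.
-/

open Finset

lemma one_div_one_add_bounds {c d : ℝ} (hd : 0 ≤ d) (hdc : d ≤ c) :
    1 / (1 + c) ≤ 1 / (1 + d) ∧ 1 / (1 + d) ≤ 1 := by
  have hpos : 0 < 1 + d := by linarith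
  exact ⟨one_div_le_one_div_of_le hpos (by linarith), by rw [div_le_one hpos]; linarith⟩

lemma abs_sum_mul_le_mul_sum {ι : Type*} {s : Finset ι} {w y : ι → ℝ} {M : ℝ}
    (hw : ∀ i ∈ s, 0 ≤ w i) (hy : ∀ i ∈ s, |y i| ≤ M) :
    |∑ i ∈ s, w i * y i| ≤ M * ∑ i ∈ s, w i := by
  calc |∑ i ∈ s, w i * y i| ≤ ∑ i ∈ s, |w i * y i| := abs_sum_le_sum_abs _ _
    _ ≤ ∑ i ∈ s, w i * M := sum_le_sum fun i hi => by
        rw [abs_mul, abs_of_nonneg (hw i hi)]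
        exact mul_le_mul_of_nonneg_left (hy i hi) (hw i hi)
    _ = M * ∑ i ∈ s, w i := by rw [← sum_mul, mul_comm]

/-- When `S = 0` the bound `|A| ≤ M * S` forces `A = 0`, so the junk value `A / 0 = 0` is
harmless. -/
lemma abs_add_mul_div_add_sub_div_le {A S a z M : ℝ} (hS : 0 ≤ S) (ha : 0 < a)
    (hA : |A| ≤ M * S) (hz : |z| ≤ M) :
    |(A + a * z) / (S + a) - A / S| ≤ 2 * M * a / (S + a) := by
  have hM : 0 ≤ M := (abs_nonneg z).trans hz
  rcases hS.eq_or_lt with rfl | hS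
  · obtain rfl : A = 0 := abs_nonpos_iff.mp (by simpa using hA)
    rw [zero_add, zero_div, sub_zero, zero_add, mul_div_cancel_left₀ _ ha.ne',
      mul_div_cancel_right₀ _ ha.ne']
    linarith
  have hSa : 0 < S + a := by linarith
  have hdiff : (A + a * z) / (S + a) - A / S = a * (z * S - A) / (S * (S + a)) := by
    field_simp
    ring
  have hnum : |z * S - A| ≤ 2 * M * S := by
    calc |z * S - A| ≤ |z * S| + |A| := abs_sub _ _
      _ ≤ M * S + M * S := by
          rw [abs_mul, abs_of_pos hS]
          gcongr
      _ = 2 * M * S := by ring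
  rw [hdiff, abs_div, abs_mul, abs_of_pos ha, abs_of_pos (mul_pos hS hSa)]
  calc a * |z * S - A| / (S * (S + a)) ≤ a * (2 * M * S) / (S * (S + a)) := by gcongr
    _ = 2 * M * a / (S + a) := by field_simp

theorem stmt_19_general {E : Type*} [NormedAddCommGroup E] (n : ℕ)
    (x' : E) (x : ℕ → E) (r M : ℝ)
    (hx : ∀ i < n, ‖x i - x'‖ ≤ 2 * r)
    (α : ℕ → ℝ) (hα : ∀ i, α i = 1 / (1 + ‖x i - x'‖))
    (y : ℕ → ℝ) (hy : ∀ i < n, |y i| ≤ M) :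
    (∀ i < n, 1 / (1 + 2 * r) ≤ α i ∧ α i ≤ 1) ∧
    |(∑ i ∈ Finset.range n, α i * y i) / (∑ i ∈ Finset.range n, α i) -
        (∑ i ∈ Finset.range (n - 1), α i * y i) / (∑ i ∈ Finset.range (n - 1), α i)| ≤
      2 * (2 * r + 1) * M / n := by
  have hbounds : ∀ i < n, 1 / (1 + 2 * r) ≤ α i ∧ α i ≤ 1 := fun i hi =>
    hα i ▸ one_div_one_add_bounds (norm_nonneg _) (hx i hi)
  refine ⟨hbounds, ?_⟩
  rcases n with _ | m
  · simp
  have hr : 0 ≤ r := by linarith [norm_nonneg (x 0 - x'), hx 0 m.succ_pos]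
  have hM : 0 ≤ M := (abs_nonneg _).trans (hy m m.lt_succ_self)
  have hpos : ∀ i < m + 1, 0 < α i := fun i hi =>
    (one_div_pos.mpr (by linarith)).trans_le (hbounds i hi).1
  have htotal : ((m + 1 : ℕ) : ℝ) / (1 + 2 * r) ≤ ∑ i ∈ range (m + 1), α i := by
    have := card_nsmul_le_sum _ _ _ fun i hi => (hbounds i (mem_range.mp hi)).1
    rwa [card_range, nsmul_eq_mul, mul_one_div] at this
  have hprefix : ∀ i ∈ range m, i < m + 1 := fun i hi => (mem_range.mp hi).trans m.lt_succ_self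
  have hstep := abs_add_mul_div_add_sub_div_le
    (sum_nonneg fun i hi => (hpos i (hprefix i hi)).le) (hpos m m.lt_succ_self)
    (abs_sum_mul_le_mul_sum (fun i hi => (hpos i (hprefix i hi)).le)
      fun i hi => hy i (hprefix i hi)) (hy m m.lt_succ_self)
  rw [sum_range_succ] at htotal
  rw [Nat.add_sub_cancel, sum_range_succ _ m, sum_range_succ _ m]
  calc _ ≤ _ := hstep
    _ ≤ 2 * M * 1 / (((m + 1 : ℕ) : ℝ) / (1 + 2 * r)) := by
        gcongr
        exact (hbounds m m.lt_succ_self).2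
    _ = _ := by field_simp; ring

/-- Corollary 23: stability of the inverse-distance weighted-average local estimator.
Points `x_1, …, x_n` in a real normed space satisfy `‖x_i − x'‖ ≤ 2r`, and the weights
are `α_i = 1/(1 + ‖x_i − x'‖)`.  Then `1/(1+2r) ≤ α_i ≤ 1`, and for labels bounded by
`M`, removing the `n`-th (point, label) pair changes the weighted-average estimate by
at most `2(2r+1)M/n`. -/
theorem stmt_19 {E : Type*} [NormedAddCommGroup E] (n : ℕ) (hn : 0 < n)
    (x' : E) (x : ℕ → E) (r M : ℝ)
    (hx : ∀ i < n, ‖x i - x'‖ ≤ 2 * r)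
    (α : ℕ → ℝ) (hα : ∀ i, α i = 1 / (1 + ‖x i - x'‖))
    (y : ℕ → ℝ) (hy : ∀ i < n, |y i| ≤ M) :
    (∀ i < n, 1 / (1 + 2 * r) ≤ α i ∧ α i ≤ 1) ∧
    |(∑ i ∈ Finset.range n, α i * y i) / (∑ i ∈ Finset.range n, α i) -
        (∑ i ∈ Finset.range (n - 1), α i * y i) / (∑ i ∈ Finset.range (n - 1), α i)| ≤
      2 * (2 * r + 1) * M / n :=
  stmt_19_general n x' x r M hx α hα y hy
end
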